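/- arXiv:1909.09810 — 11 statements merged into one kernel-verified Lean document; each statement's English description precedes it below -/
import Mathlib

section
/- Let ψ : ℝ → ℝ be a regularization function and let β₁, β₂ ∈ ℝ with β₁·β₂ < 0. Define G : ℝ → ℝ by G(u) = ((1+ψ(u))/2)·β₁ + ((1−ψ(u))/2)·β₂ (the layer problem of the regularization across a codimension-1 switching manifold). Then there exists a unique u* ∈ ℝ with G(u*) = 0; it satisfies ψ(u*) = (β₂+β₁)/(β₂−β₁); and G'(u*) < 0 when β₁ < 0 < β₂ (stable sliding yields a normally hyperbolic attracting critical point), while G'(u*) > 0 when β₂ < 0 < β₁ (unstable sliding yields a repelling critical point). -/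
open Filter Set

/-- A regularization function: a C¹ function ψ : ℝ → ℝ with ψ' > 0 everywhere,
values in (-1,1), tending to ±1 as u → ±∞. -/
def IsRegularization (ψ : ℝ → ℝ) : Prop :=
  ContDiff ℝ 1 ψ ∧ (∀ u, 0 < deriv ψ u) ∧ (∀ u, ψ u ∈ Set.Ioo (-1 : ℝ) 1) ∧
    Tendsto ψ atTop (nhds 1) ∧ Tendsto ψ atBot (nhds (-1))

/-! The layer function is affine in `ψ u` with slope `(β₁ - β₂) / 2`, so its zeros are the
solutions of `ψ u = (β₂ + β₁) / (β₂ - β₁)`; sliding (`β₁ β₂ < 0`) puts this value in `(-1, 1)`,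
the range of `ψ`, where the strictly increasing `ψ` takes it exactly once. The sign of
`G' = (β₁ - β₂) / 2 · ψ'` is the sign of `β₁ - β₂`. -/

theorem StrictMono.existsUnique_eq_of_tendsto {f : ℝ → ℝ} (hf : StrictMono f)
    (hcont : Continuous f) {a b c : ℝ} (hbot : Tendsto f atBot (nhds a))
    (htop : Tendsto f atTop (nhds b)) (hc : c ∈ Ioo a b) : ∃! u, f u = c := by
  obtain ⟨x, hx⟩ := (hbot.eventually_lt_const hc.1).exists
  obtain ⟨y, hy⟩ := (htop.eventually_const_lt hc.2).exists
  have hxy : x ≤ y := (hf.lt_iff_lt.mp (hx.trans hy)).le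
  obtain ⟨u, -, hu⟩ := intermediate_value_Icc hxy hcont.continuousOn ⟨hx.le, hy.le⟩
  exact ⟨u, hu, fun v hv => hf.injective (hv.trans hu.symm)⟩

namespace IsRegularization

variable {ψ : ℝ → ℝ}

theorem differentiable (hψ : IsRegularization ψ) : Differentiable ℝ ψ :=
  hψ.1.differentiable one_ne_zero

theorem strictMono (hψ : IsRegularization ψ) : StrictMono ψ :=
  strictMono_of_deriv_pos hψ.2.1

theorem existsUnique_eq (hψ : IsRegularization ψ) {c : ℝ} (hc : c ∈ Ioo (-1 : ℝ) 1) :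
    ∃! u, ψ u = c :=
  hψ.strictMono.existsUnique_eq_of_tendsto hψ.differentiable.continuous hψ.2.2.2.2
    hψ.2.2.2.1 hc

end IsRegularization

section Layer

variable {β₁ β₂ : ℝ}

theorem sub_ne_zero_of_mul_neg (hβ : β₁ * β₂ < 0) : β₂ - β₁ ≠ 0 := by
  rcases mul_neg_iff.mp hβ with ⟨h₁, h₂⟩ | ⟨h₁, h₂⟩ <;> intro h <;> linarith

theorem add_div_sub_mem_Ioo_of_mul_neg (hβ : β₁ * β₂ < 0) :
    (β₂ + β₁) / (β₂ - β₁) ∈ Ioo (-1 : ℝ) 1 := by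
  rcases mul_neg_iff.mp hβ with ⟨h₁, h₂⟩ | ⟨h₁, h₂⟩
  · have hneg : β₂ - β₁ < 0 := by linarith
    rw [mem_Ioo, lt_div_iff_of_neg hneg, div_lt_iff_of_neg hneg]
    constructor <;> linarith
  · have hpos : 0 < β₂ - β₁ := by linarith
    rw [mem_Ioo, lt_div_iff₀ hpos, div_lt_iff₀ hpos]
    constructor <;> linarith

theorem layer_eq_zero_iff {K : Type*} [Field K] [CharZero K] {β₁ β₂ p : K} (hβ : β₂ - β₁ ≠ 0) :
    (1 + p) / 2 * β₁ + (1 - p) / 2 * β₂ = 0 ↔ p = (β₂ + β₁) / (β₂ - β₁) := by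
  rw [eq_div_iff hβ]
  constructor
  · intro h; linear_combination -2 * h
  · intro h; linear_combination -h / 2

theorem layer_eq_affine (ψ : ℝ → ℝ) (β₁ β₂ : ℝ) :
    (fun u => (1 + ψ u) / 2 * β₁ + (1 - ψ u) / 2 * β₂) =
      fun u => (β₁ - β₂) / 2 * ψ u + (β₁ + β₂) / 2 := by
  funext u; ring

theorem deriv_layer {ψ : ℝ → ℝ} (hψ : Differentiable ℝ ψ) (β₁ β₂ u : ℝ) :
    deriv (fun u => (1 + ψ u) / 2 * β₁ + (1 - ψ u) / 2 * β₂) u = (β₁ - β₂) / 2 * deriv ψ u := by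
  rw [layer_eq_affine, deriv_add_const, deriv_const_mul _ (hψ u)]

end Layer

/-- Across a codimension-1 switching manifold with sliding (β₁β₂ < 0), the layer problem
G(u) = ((1+ψ(u))/2)β₁ + ((1-ψ(u))/2)β₂ has a unique zero u*, which satisfies
ψ(u*) = (β₂+β₁)/(β₂-β₁); it is attracting (G'(u*) < 0) for stable sliding
(β₁ < 0 < β₂) and repelling (G'(u*) > 0) for unstable sliding (β₂ < 0 < β₁). -/
theorem stmt0 (ψ : ℝ → ℝ) (hψ : IsRegularization ψ) (β₁ β₂ : ℝ) (hβ : β₁ * β₂ < 0)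
    (G : ℝ → ℝ) (hG : ∀ u, G u = (1 + ψ u) / 2 * β₁ + (1 - ψ u) / 2 * β₂) :
    (∃! u, G u = 0) ∧
    ∀ u, G u = 0 →
      ψ u = (β₂ + β₁) / (β₂ - β₁) ∧
      (β₁ < 0 → 0 < β₂ → deriv G u < 0) ∧
      (β₂ < 0 → 0 < β₁ → 0 < deriv G u) := by
  have hzero : ∀ u, G u = 0 ↔ ψ u = (β₂ + β₁) / (β₂ - β₁) := fun u => by
    rw [hG u, layer_eq_zero_iff (sub_ne_zero_of_mul_neg hβ)]
  have hderiv : ∀ u, deriv G u = (β₁ - β₂) / 2 * deriv ψ u := fun u => by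
    rw [funext hG, deriv_layer hψ.differentiable]
  refine ⟨?_, fun u hu => ⟨(hzero u).mp hu, fun h₁ h₂ => ?_, fun h₂ h₁ => ?_⟩⟩
  · simpa only [hzero] using hψ.existsUnique_eq (add_div_sub_mem_Ioo_of_mul_neg hβ)
  · rw [hderiv]
    exact mul_neg_of_neg_of_pos (by linarith) (hψ.2.1 u)
  · rw [hderiv]
    exact mul_pos (by linarith) (hψ.2.1 u)
end

section
/- Let V₁, V₂, V₃, V₄ ∈ ℝ² with Vᵢ = (βᵢ, γᵢ), and suppose (s,t) ∈ (0,1) × (0,1) satisfies G(s,t) = (0,0). Then t satisfies the quadratic equation (A + Γ − B)·t² + (B − 2Γ)·t + Γ = 0. If moreover A + Γ − B ≠ 0, then Δ ≥ 0 and t = (2Γ − B + √Δ)/(2(A + Γ − B)) or t = (2Γ − B − √Δ)/(2(A + Γ − B)); and if in addition (β₂−β₁)·t + (β₃−β₄)·(1−t) ≠ 0, then s = (β₂·t + β₃·(1−t)) / ((β₂−β₁)·t + (β₃−β₄)·(1−t)). -/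
/-! Writing P(t) = t V₁ + (1 - t) V₄ and Q(t) = t V₂ + (1 - t) V₃, the map is the bilinear
interpolation G(s,t) = s P(t) + (1 - s) Q(t), so a zero of G forces P(t) and Q(t) to be parallel.
Expanding det(P(t), Q(t)) = t² A + t(1 - t) B + (1 - t)² Γ gives the quadratic in t, whose
discriminant is Δ; s is then read off the first coordinate of G(s,t) = 0. -/

noncomputable def det2 (U W : ℝ × ℝ) : ℝ := U.1 * W.2 - U.2 * W.1

noncomputable def Gmap (V₁ V₂ V₃ V₄ : ℝ × ℝ) (s t : ℝ) : ℝ × ℝ :=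
  (s * t) • V₁ + ((1 - s) * t) • V₂ + ((1 - s) * (1 - t)) • V₃ + (s * (1 - t)) • V₄

open AffineMap

theorem discrim_nonneg_of_quadratic_eq_zero {K : Type*} [CommRing K] [LinearOrder K]
    [IsStrictOrderedRing K] {a b c x : K} (h : a * (x * x) + b * x + c = 0) :
    0 ≤ discrim a b c := by
  rw [discrim_eq_sq_of_quadratic_eq_zero h]
  positivity

theorem eq_quadratic_root_of_quadratic_eq_zero {a b c x : ℝ} (ha : a ≠ 0)
    (h : a * (x * x) + b * x + c = 0) :
    x = (-b + √(discrim a b c)) / (2 * a) ∨ x = (-b - √(discrim a b c)) / (2 * a) :=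
  (quadratic_eq_zero_iff ha (Real.mul_self_sqrt (discrim_nonneg_of_quadratic_eq_zero h)).symm
    x).mp h

theorem Gmap_eq_lineMap (V₁ V₂ V₃ V₄ : ℝ × ℝ) (s t : ℝ) :
    Gmap V₁ V₂ V₃ V₄ s t = lineMap (lineMap V₃ V₂ t) (lineMap V₄ V₁ t) s := by
  simp only [Gmap, lineMap_apply_module]
  module

theorem det2_lineMap_lineMap (V₁ V₂ V₃ V₄ : ℝ × ℝ) (t : ℝ) :
    det2 (lineMap V₄ V₁ t) (lineMap V₃ V₂ t) =
      t ^ 2 * det2 V₁ V₂ + t * (1 - t) * (det2 V₄ V₂ + det2 V₁ V₃) + (1 - t) ^ 2 * det2 V₄ V₃ := by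
  simp only [det2, lineMap_apply_module, Prod.fst_add, Prod.snd_add, Prod.smul_fst,
    Prod.smul_snd, smul_eq_mul]
  ring

-- `lineMap Q P s = 0` says `Q = s • (Q - P)`, so `Q` is parallel to `Q - P`.
theorem det2_eq_zero_of_lineMap_eq_zero {P Q : ℝ × ℝ} {s : ℝ} (h : lineMap Q P s = 0) :
    det2 P Q = 0 := by
  rw [lineMap_apply_module, Prod.ext_iff] at h
  simp only [Prod.fst_add, Prod.snd_add, Prod.smul_fst, Prod.smul_snd, smul_eq_mul,
    Prod.fst_zero, Prod.snd_zero] at h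
  unfold det2
  linear_combination (Q.2 - P.2) * h.1 - (Q.1 - P.1) * h.2

theorem stmt4_general (V₁ V₂ V₃ V₄ : ℝ × ℝ) (β₁ β₂ β₃ β₄ γ₁ γ₂ γ₃ γ₄ : ℝ)
    (h1 : V₁ = (β₁, γ₁)) (h2 : V₂ = (β₂, γ₂)) (h3 : V₃ = (β₃, γ₃)) (h4 : V₄ = (β₄, γ₄))
    (A B Γ Δ : ℝ)
    (hA : A = det2 V₁ V₂) (hB : B = det2 V₄ V₂ + det2 V₁ V₃) (hΓ : Γ = det2 V₄ V₃)
    (hΔ : Δ = B ^ 2 - 4 * A * Γ)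
    (s t : ℝ)
    (hG : Gmap V₁ V₂ V₃ V₄ s t = 0) :
    (A + Γ - B) * t ^ 2 + (B - 2 * Γ) * t + Γ = 0 ∧
    (A + Γ - B ≠ 0 →
      0 ≤ Δ ∧
      (t = (2 * Γ - B + Real.sqrt Δ) / (2 * (A + Γ - B)) ∨
        t = (2 * Γ - B - Real.sqrt Δ) / (2 * (A + Γ - B))) ∧
      ((β₂ - β₁) * t + (β₃ - β₄) * (1 - t) ≠ 0 →
        s = (β₂ * t + β₃ * (1 - t)) / ((β₂ - β₁) * t + (β₃ - β₄) * (1 - t)))) := by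
  rw [Gmap_eq_lineMap] at hG
  have hquad : (A + Γ - B) * (t * t) + (B - 2 * Γ) * t + Γ = 0 := by
    rw [hA, hB, hΓ]
    linear_combination
      (det2_lineMap_lineMap V₁ V₂ V₃ V₄ t).symm.trans (det2_eq_zero_of_lineMap_eq_zero hG)
  have hdiscrim : discrim (A + Γ - B) (B - 2 * Γ) Γ = Δ := by
    rw [discrim, hΔ]
    ring
  refine ⟨by linear_combination hquad, fun ha => ⟨?_, ?_, fun hden => ?_⟩⟩
  · exact hdiscrim ▸ discrim_nonneg_of_quadratic_eq_zero hquad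
  · rw [← hdiscrim, ← neg_sub B]
    exact eq_quadratic_root_of_quadratic_eq_zero ha hquad
  · have hβ := congrArg Prod.fst hG
    subst h1 h2 h3 h4
    simp only [lineMap_apply_module, Prod.fst_add, Prod.smul_fst, smul_eq_mul, Prod.fst_zero] at hβ
    rw [eq_div_iff hden]
    linear_combination -hβ

/-- A zero (s,t) ∈ (0,1)² of the canopy map has t satisfying the quadratic
(A+Γ-B)t² + (B-2Γ)t + Γ = 0; if A+Γ-B ≠ 0 then Δ ≥ 0 and t is given by the quadratic
formula, and s is determined by t whenever its denominator is nonzero. -/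
theorem stmt4 (V₁ V₂ V₃ V₄ : ℝ × ℝ) (β₁ β₂ β₃ β₄ γ₁ γ₂ γ₃ γ₄ : ℝ)
    (h1 : V₁ = (β₁, γ₁)) (h2 : V₂ = (β₂, γ₂)) (h3 : V₃ = (β₃, γ₃)) (h4 : V₄ = (β₄, γ₄))
    (A B Γ Δ : ℝ)
    (hA : A = det2 V₁ V₂) (hB : B = det2 V₄ V₂ + det2 V₁ V₃) (hΓ : Γ = det2 V₄ V₃)
    (hΔ : Δ = B ^ 2 - 4 * A * Γ)
    (s t : ℝ) (hs : s ∈ Set.Ioo (0 : ℝ) 1) (ht : t ∈ Set.Ioo (0 : ℝ) 1)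
    (hG : Gmap V₁ V₂ V₃ V₄ s t = 0) :
    (A + Γ - B) * t ^ 2 + (B - 2 * Γ) * t + Γ = 0 ∧
    (A + Γ - B ≠ 0 →
      0 ≤ Δ ∧
      (t = (2 * Γ - B + Real.sqrt Δ) / (2 * (A + Γ - B)) ∨
        t = (2 * Γ - B - Real.sqrt Δ) / (2 * (A + Γ - B))) ∧
      ((β₂ - β₁) * t + (β₃ - β₄) * (1 - t) ≠ 0 →
        s = (β₂ * t + β₃ * (1 - t)) / ((β₂ - β₁) * t + (β₃ - β₄) * (1 - t)))) :=
  stmt4_general V₁ V₂ V₃ V₄ β₁ β₂ β₃ β₄ γ₁ γ₂ γ₃ γ₄ h1 h2 h3 h4 A B Γ Δ hA hB hΓ hΔ s t hG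
end

section
/- Let V₁, V₂, V₃, V₄ ∈ ℝ² and suppose A + Γ − B = 0 and 2Γ − B ≠ 0. If (s,t) ∈ (0,1) × (0,1) satisfies G(s,t) = (0,0), then t = Γ/(2Γ − B). -/
/-- In the degenerate case A + Γ - B = 0 (with 2Γ - B ≠ 0), any zero (s,t) ∈ (0,1)²
of the canopy map has t = Γ/(2Γ - B). -/
theorem stmt5 (V₁ V₂ V₃ V₄ : ℝ × ℝ) (A B Γ : ℝ)
    (hA : A = det2 V₁ V₂) (hB : B = det2 V₄ V₂ + det2 V₁ V₃) (hΓ : Γ = det2 V₄ V₃)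
    (hdeg : A + Γ - B = 0) (hne : 2 * Γ - B ≠ 0)
    (s t : ℝ) (hs : s ∈ Set.Ioo (0 : ℝ) 1) (ht : t ∈ Set.Ioo (0 : ℝ) 1)
    (hG : Gmap V₁ V₂ V₃ V₄ s t = 0) :
    t = Γ / (2 * Γ - B) := by
  obtain ⟨hs0, hs1⟩ := hs
  have h1 : s * t * V₁.1 + (1 - s) * t * V₂.1 + (1 - s) * (1 - t) * V₃.1
      + s * (1 - t) * V₄.1 = 0 := by
    have := congrArg Prod.fst hG
    simpa [Gmap] using this
  have h2 : s * t * V₁.2 + (1 - s) * t * V₂.2 + (1 - s) * (1 - t) * V₃.2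
      + s * (1 - t) * V₄.2 = 0 := by
    have := congrArg Prod.snd hG
    simpa [Gmap] using this
  subst hA hB hΓ
  unfold det2 at *
  have key : s * (t * (2 * (V₄.1 * V₃.2 - V₄.2 * V₃.1)
      - (V₄.1 * V₂.2 - V₄.2 * V₂.1 + (V₁.1 * V₃.2 - V₁.2 * V₃.1)))
      - (V₄.1 * V₃.2 - V₄.2 * V₃.1)) = 0 := by
    linear_combination (-(t * V₂.2 + (1 - t) * V₃.2)) * h1
      + (t * V₂.1 + (1 - t) * V₃.1) * h2 + s * t ^ 2 * hdeg
  have hsne : s ≠ 0 := ne_of_gt hs0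
  have key2 := (mul_eq_zero.mp key).resolve_left hsne
  rw [eq_div_iff hne]
  linarith [key2]
end

section
/- Let X₁, X₂, X₃, X₄ ∈ ℝ³ and let Vᵢ ∈ ℝ² be the projection of Xᵢ onto its second and third coordinates. If (s,t) ∈ (0,1) × (0,1) satisfies G(s,t) = (0,0), then the numbers ν₁ = s·t, ν₂ = (1−s)·t, ν₃ = (1−s)·(1−t), ν₄ = s·(1−t) all lie in (0,1), satisfy ν₁ + ν₂ + ν₃ + ν₄ = 1, and the convex combination ν₁·X₁ + ν₂·X₂ + ν₃·X₃ + ν₄·X₄ has vanishing second and third coordinates (it is tangent to the x-axis Λ). Hence every sliding vector field defined through the critical manifold of the regularization is a sliding vector field in the extended Filippov sense. -/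
/-- Every zero (s,t) ∈ (0,1)² of the canopy map (built from the (y,z)-projections of
X₁,…,X₄ ∈ ℝ³) yields Filippov coefficients ν₁ = st, ν₂ = (1-s)t, ν₃ = (1-s)(1-t),
ν₄ = s(1-t) in (0,1) summing to 1 such that ν₁X₁ + ν₂X₂ + ν₃X₃ + ν₄X₄ has vanishing
second and third coordinates, i.e. it is tangent to the x-axis Λ. -/
theorem stmt6 (X₁ X₂ X₃ X₄ : ℝ × ℝ × ℝ) (V₁ V₂ V₃ V₄ : ℝ × ℝ)
    (h1 : V₁ = (X₁.2.1, X₁.2.2)) (h2 : V₂ = (X₂.2.1, X₂.2.2))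
    (h3 : V₃ = (X₃.2.1, X₃.2.2)) (h4 : V₄ = (X₄.2.1, X₄.2.2))
    (s t : ℝ) (hs : s ∈ Set.Ioo (0 : ℝ) 1) (ht : t ∈ Set.Ioo (0 : ℝ) 1)
    (hG : Gmap V₁ V₂ V₃ V₄ s t = 0) :
    s * t ∈ Set.Ioo (0 : ℝ) 1 ∧ (1 - s) * t ∈ Set.Ioo (0 : ℝ) 1 ∧
    (1 - s) * (1 - t) ∈ Set.Ioo (0 : ℝ) 1 ∧ s * (1 - t) ∈ Set.Ioo (0 : ℝ) 1 ∧
    s * t + (1 - s) * t + (1 - s) * (1 - t) + s * (1 - t) = 1 ∧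
    ((s * t) • X₁ + ((1 - s) * t) • X₂ + ((1 - s) * (1 - t)) • X₃ +
      (s * (1 - t)) • X₄).2.1 = 0 ∧
    ((s * t) • X₁ + ((1 - s) * t) • X₂ + ((1 - s) * (1 - t)) • X₃ +
      (s * (1 - t)) • X₄).2.2 = 0 := by
  obtain ⟨hs0, hs1⟩ := hs
  obtain ⟨ht0, ht1⟩ := ht
  have h1s : 0 < 1 - s := by linarith
  have h1t : 0 < 1 - t := by linarith
  have hGfst : (Gmap V₁ V₂ V₃ V₄ s t).1 = 0 := by rw [hG]; rfl
  have hGsnd : (Gmap V₁ V₂ V₃ V₄ s t).2 = 0 := by rw [hG]; rfl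
  simp only [Gmap, h1, h2, h3, h4, Prod.fst_add, Prod.snd_add, Prod.smul_mk, smul_eq_mul] at hGfst hGsnd
  refine ⟨⟨by positivity, ?_⟩, ⟨by positivity, ?_⟩, ⟨by positivity, ?_⟩, ⟨by positivity, ?_⟩, by ring, ?_, ?_⟩
  · nlinarith
  · nlinarith
  · nlinarith
  · nlinarith
  · simp only [Prod.smul_def, Prod.fst_add, Prod.snd_add, smul_eq_mul]
    linarith [hGfst]
  · simp only [Prod.smul_def, Prod.fst_add, Prod.snd_add, smul_eq_mul]
    linarith [hGsnd]
end

section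
/- Let V₁, V₂, V₃, V₄ ∈ ℝ². Suppose that not all of A, B, Γ are zero, and that for every t ∈ (0,1) the vector t·(V₁−V₂) + (1−t)·(V₄−V₃) is nonzero. Then the set { (s,t) ∈ (0,1) × (0,1) : G(s,t) = (0,0) } has at most two elements; i.e., there exist zero, one, or two sliding vector fields on the codimension-2 discontinuity Λ. -/
/-- If not all of A, B, Γ vanish, and t·(V₁-V₂) + (1-t)·(V₄-V₃) ≠ 0 for every
t ∈ (0,1), then the canopy map has at most two zeros in (0,1)²: there exist zero,
one, or two sliding vector fields on the codimension-2 discontinuity Λ. -/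
theorem stmt8 (V₁ V₂ V₃ V₄ : ℝ × ℝ) (A B Γ : ℝ)
    (hA : A = det2 V₁ V₂) (hB : B = det2 V₄ V₂ + det2 V₁ V₃) (hΓ : Γ = det2 V₄ V₃)
    (hnz : ¬(A = 0 ∧ B = 0 ∧ Γ = 0))
    (hu : ∀ t ∈ Set.Ioo (0 : ℝ) 1, t • (V₁ - V₂) + (1 - t) • (V₄ - V₃) ≠ 0) :
    {p : ℝ × ℝ | p.1 ∈ Set.Ioo (0 : ℝ) 1 ∧ p.2 ∈ Set.Ioo (0 : ℝ) 1 ∧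
      Gmap V₁ V₂ V₃ V₄ p.1 p.2 = 0}.encard ≤ 2 := by
  set S := {p : ℝ × ℝ | p.1 ∈ Set.Ioo (0 : ℝ) 1 ∧ p.2 ∈ Set.Ioo (0 : ℝ) 1 ∧
      Gmap V₁ V₂ V₃ V₄ p.1 p.2 = 0} with hS
  set P : Polynomial ℝ :=
    Polynomial.C (A - B + Γ) * Polynomial.X ^ 2 + Polynomial.C (B - 2 * Γ) * Polynomial.X
      + Polynomial.C Γ with hP
  have hPne : P ≠ 0 := by
    intro h
    apply hnz
    have h2 : A - B + Γ = 0 := by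
      have := congrArg (Polynomial.coeff · 2) h
      simpa [hP, Polynomial.coeff_add, Polynomial.coeff_C_mul, Polynomial.coeff_X_pow,
        Polynomial.coeff_C, Polynomial.coeff_X, -map_add, -map_sub] using this
    have h1 : B - 2 * Γ = 0 := by
      have := congrArg (Polynomial.coeff · 1) h
      simpa [hP, Polynomial.coeff_add, Polynomial.coeff_C_mul, Polynomial.coeff_X_pow,
        Polynomial.coeff_C, Polynomial.coeff_X, -map_add, -map_sub] using this
    have h0 : Γ = 0 := by
      have := congrArg (Polynomial.coeff · 0) h
      simpa [hP, Polynomial.coeff_add, Polynomial.coeff_C_mul, Polynomial.coeff_X_pow,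
        Polynomial.coeff_C, Polynomial.coeff_X, -map_add, -map_sub] using this
    refine ⟨by linarith, by linarith, h0⟩
  -- injectivity of snd on S
  have hinj : Set.InjOn Prod.snd S := by
    rintro ⟨s, t⟩ hp ⟨s', t'⟩ hq (h : t = t')
    subst h
    obtain ⟨hs, ht, hG⟩ := hp
    obtain ⟨hs', -, hG'⟩ := hq
    have hne := hu t ht
    have hdiff : (s - s') • (t • (V₁ - V₂) + (1 - t) • (V₄ - V₃)) = 0 := by
      have := sub_eq_zero.mpr (hG.trans hG'.symm)
      rw [← this]
      apply Prod.ext <;>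
        simp [Gmap, Prod.ext_iff] <;> ring
    rcases smul_eq_zero.mp hdiff with h | h
    · have : s = s' := by linarith [sub_eq_zero.mp h]
      simp [this]
    · exact absurd h hne
  -- each zero has t a root of P
  have himg : Prod.snd '' S ⊆ {t : ℝ | P.eval t = 0} := by
    rintro t ⟨⟨s, t⟩, ⟨hs, ht, hG⟩, rfl⟩
    have e1 : s * t * V₁.1 + (1 - s) * t * V₂.1 + (1 - s) * (1 - t) * V₃.1
        + s * (1 - t) * V₄.1 = 0 := by
      have := congrArg Prod.fst hG
      simpa [Gmap] using this
    have e2 : s * t * V₁.2 + (1 - s) * t * V₂.2 + (1 - s) * (1 - t) * V₃.2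
        + s * (1 - t) * V₄.2 = 0 := by
      have := congrArg Prod.snd hG
      simpa [Gmap] using this
    have hs0 : s ≠ 0 := ne_of_gt hs.1
    have key : s * ((A - B + Γ) * t ^ 2 + (B - 2 * Γ) * t + Γ) = 0 := by
      rw [hA, hB, hΓ]
      simp only [det2]
      linear_combination (t * V₂.2 + (1 - t) * V₃.2) * e1 - (t * V₂.1 + (1 - t) * V₃.1) * e2
    have : (A - B + Γ) * t ^ 2 + (B - 2 * Γ) * t + Γ = 0 := by
      rcases mul_eq_zero.mp key with h | h
      · exact absurd h hs0
      · exact h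
    show P.eval t = 0
    simpa [hP] using this
  have hfin : {t : ℝ | P.eval t = 0}.Finite := Polynomial.finite_setOf_isRoot hPne
  calc S.encard = (Prod.snd '' S).encard := (hinj.encard_image).symm
    _ ≤ {t : ℝ | P.eval t = 0}.encard := Set.encard_mono himg
    _ ≤ 2 := by
        rw [Set.Finite.encard_eq_coe_toFinset_card hfin]
        have h1 : hfin.toFinset.card ≤ P.natDegree := by
          have : ∀ x ∈ hfin.toFinset, P.IsRoot x := by
            intro x hx
            simpa using (Set.Finite.mem_toFinset hfin).mp hx
          exact Polynomial.card_le_degree_of_subset_roots (fun x hx => by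
            rw [Polynomial.mem_roots hPne]; exact this x hx)
        have h2 : P.natDegree ≤ 2 := Polynomial.natDegree_quadratic_le
        exact_mod_cast h1.trans h2
end

section
/- Let V₁, V₂, V₃, V₄ ∈ ℝ² and assume the projected quadrilateral is convex, i.e. the difference determinants δ₁, δ₂, δ₃, δ₄ are all of the same (nonzero) sign. Then the two conditions det(V₁,V₂)·det(V₃,V₄) > 0 and det(V₂,V₃)·det(V₄,V₁) > 0 hold if and only if there exists exactly one point (s,t) ∈ (0,1) × (0,1) with G(s,t) = (0,0); i.e., a unique sliding vector field is defined on the codimension-2 discontinuity Λ. -/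
lemma gmap_zero_iff (a1 a2 b1 b2 c1 c2 e1 e2 s t : ℝ) :
    Gmap (a1,a2) (b1,b2) (c1,c2) (e1,e2) s t = 0 ↔
    (s*t*a1 + (1-s)*t*b1 + (1-s)*(1-t)*c1 + s*(1-t)*e1 = 0 ∧
     s*t*a2 + (1-s)*t*b2 + (1-s)*(1-t)*c2 + s*(1-t)*e2 = 0) := by
  simp [Gmap, Prod.ext_iff]

-- if G(s,t)=0 with s,t ∈ (0,1) then each det(Vi,Vi+1) is a positive combination of the δ's
lemma zeroPos (a1 a2 b1 b2 c1 c2 e1 e2 k1 k2 k3 k4 d1 d2 d3 d4 s t : ℝ)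
    (hk1 : k1 = (b1-a1)*(c2-b2)-(b2-a2)*(c1-b1))
    (hk2 : k2 = (c1-b1)*(e2-c2)-(c2-b2)*(e1-c1))
    (hk3 : k3 = (e1-c1)*(a2-e2)-(e2-c2)*(a1-e1))
    (hk4 : k4 = (a1-e1)*(b2-a2)-(a2-e2)*(b1-a1))
    (hd1 : d1 = a1*b2-a2*b1) (hd2 : d2 = b1*c2-b2*c1)
    (hd3 : d3 = c1*e2-c2*e1) (hd4 : d4 = e1*a2-e2*a1)
    (p1 : 0 < k1) (p2 : 0 < k2) (p3 : 0 < k3) (p4 : 0 < k4)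
    (hs0 : 0 < s) (hs1 : s < 1) (ht0 : 0 < t) (ht1 : t < 1)
    (hG1 : s*t*a1 + (1-s)*t*b1 + (1-s)*(1-t)*c1 + s*(1-t)*e1 = 0)
    (hG2 : s*t*a2 + (1-s)*t*b2 + (1-s)*(1-t)*c2 + s*(1-t)*e2 = 0) :
    0 < d1 ∧ 0 < d2 ∧ 0 < d3 ∧ 0 < d4 := by
  have id1 : d1 = (1-s)*(1-t)*k1 + s*(1-t)*k4 := by
    linear_combination (b2-a2)*hG1 - (b1-a1)*hG2 + hd1 - (1-s)*(1-t)*hk1 - s*(1-t)*hk4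
  have id2 : d2 = s*t*k1 + s*(1-t)*k2 := by
    linear_combination (c2-b2)*hG1 - (c1-b1)*hG2 + hd2 - s*t*hk1 - s*(1-t)*hk2
  have id3 : d3 = s*t*k3 + (1-s)*t*k2 := by
    linear_combination (e2-c2)*hG1 - (e1-c1)*hG2 + hd3 - s*t*hk3 - (1-s)*t*hk2
  have id4 : d4 = (1-s)*t*k4 + (1-s)*(1-t)*k3 := by
    linear_combination (a2-e2)*hG1 - (a1-e1)*hG2 + hd4 - (1-s)*t*hk4 - (1-s)*(1-t)*hk3
  have h1s : 0 < 1 - s := by linarith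
  have h1t : 0 < 1 - t := by linarith
  refine ⟨?_, ?_, ?_, ?_⟩
  · linarith [mul_pos (mul_pos h1s h1t) p1, mul_pos (mul_pos hs0 h1t) p4]
  · linarith [mul_pos (mul_pos hs0 ht0) p1, mul_pos (mul_pos hs0 h1t) p2]
  · linarith [mul_pos (mul_pos hs0 ht0) p3, mul_pos (mul_pos h1s ht0) p2]
  · linarith [mul_pos (mul_pos h1s ht0) p4, mul_pos (mul_pos h1s h1t) p3]

lemma quadUnique {A B C t t' : ℝ} (h : A*t^2+B*t+C = 0) (h' : A*t'^2+B*t'+C = 0)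
    (ht : 0<t) (ht1 : t<1) (ht' : 0<t') (ht1' : t'<1) (hsign : C*(A+B+C) < 0) : t = t' := by
  by_contra hne
  have hf : (t - t')*(A*(t+t')+B) = 0 := by linear_combination h - h'
  have hB : A*(t+t')+B = 0 := by
    rcases mul_eq_zero.1 hf with h0 | h0
    · exact absurd (sub_eq_zero.1 h0) hne
    · exact h0
  have hC : C = A*t*t' := by linear_combination h - t*hB
  have hABC : A+B+C = A*(1-t)*(1-t') := by linear_combination hB + hC
  have hsign2 : (A*t*t')*(A*(1-t)*(1-t')) < 0 := by rw [← hC, ← hABC]; exact hsign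
  nlinarith [sq_nonneg A, mul_pos (mul_pos ht ht') (mul_pos (sub_pos.2 ht1) (sub_pos.2 ht1'))]

lemma ptNonzero (P1 P2 x y d : ℝ) (hd : d ≠ 0) (hdet : P1*x - P2*y = d) :
    0 < P1^2 + P2^2 := by
  rcases eq_or_lt_of_le (by positivity : (0:ℝ) ≤ P1^2+P2^2) with h | h
  · exfalso
    have h1 : P1 = 0 := by nlinarith [sq_nonneg P1, sq_nonneg P2]
    have h2 : P2 = 0 := by nlinarith [sq_nonneg P1, sq_nonneg P2]
    apply hd; rw [← hdet, h1, h2]; ring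
  · exact h

lemma collinearFactor (P1 P2 R1 R2 : ℝ) (h : P1*R2 - P2*R1 = 0) (hP : 0 < P1^2+P2^2) :
    ∃ c : ℝ, R1 = c*P1 ∧ R2 = c*P2 := by
  have hne : P1^2+P2^2 ≠ 0 := ne_of_gt hP
  refine ⟨(P1*R1+P2*R2)/(P1^2+P2^2), ?_, ?_⟩
  · field_simp
    linear_combination (-P2)*h
  · field_simp
    linear_combination P1*h

set_option maxHeartbeats 1000000 in
lemma core (a1 a2 b1 b2 c1 c2 e1 e2 k1 k2 k3 k4 d1 d2 d3 d4 : ℝ)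
    (hk1 : k1 = (b1-a1)*(c2-b2)-(b2-a2)*(c1-b1))
    (hk2 : k2 = (c1-b1)*(e2-c2)-(c2-b2)*(e1-c1))
    (hk3 : k3 = (e1-c1)*(a2-e2)-(e2-c2)*(a1-e1))
    (hk4 : k4 = (a1-e1)*(b2-a2)-(a2-e2)*(b1-a1))
    (hd1 : d1 = a1*b2-a2*b1) (hd2 : d2 = b1*c2-b2*c1)
    (hd3 : d3 = c1*e2-c2*e1) (hd4 : d4 = e1*a2-e2*a1)
    (p1 : 0 < k1) (p2 : 0 < k2) (p3 : 0 < k3) (p4 : 0 < k4) :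
    (0 < d1*d3 ∧ 0 < d2*d4) ↔
    (∃! p : ℝ × ℝ, p.1 ∈ Set.Ioo (0:ℝ) 1 ∧ p.2 ∈ Set.Ioo (0:ℝ) 1 ∧
      Gmap (a1,a2) (b1,b2) (c1,c2) (e1,e2) p.1 p.2 = 0) := by
  constructor
  · rintro ⟨hp13, hp24⟩
    -- the quadratic f(t) = det(P(t), R(t)), P on edge V₃V₂, R on edge V₄V₁
    set f : ℝ → ℝ := fun x =>
      (x*b1+(1-x)*c1)*(x*a2+(1-x)*e2) - (x*b2+(1-x)*c2)*(x*a1+(1-x)*e1) with hfdef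
    have hfc : Continuous f := by fun_prop
    have hf0 : f 0 = d3 := by
      have hh : f 0 = (0*b1+(1-0)*c1)*(0*a2+(1-0)*e2) - (0*b2+(1-0)*c2)*(0*a1+(1-0)*e1) := rfl
      rw [hh, hd3]; ring
    have hf1 : f 1 = -d1 := by
      have hh : f 1 = (1*b1+(1-1)*c1)*(1*a2+(1-1)*e2) - (1*b2+(1-1)*c2)*(1*a1+(1-1)*e1) := rfl
      rw [hh, hd1]; ring
    -- a root of f in (0,1)
    have hroot : ∃ t ∈ Set.Ioo (0:ℝ) 1, f t = 0 := by
      rcases mul_pos_iff.1 hp13 with ⟨h1, h3⟩ | ⟨h1, h3⟩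
      · have hsub := intermediate_value_Ioo' (by norm_num : (0:ℝ) ≤ 1) hfc.continuousOn
        have h0 : (0:ℝ) ∈ Set.Ioo (f 1) (f 0) := by rw [hf0, hf1]; constructor <;> linarith
        obtain ⟨t, ht, hft⟩ := hsub h0
        exact ⟨t, ht, hft⟩
      · have hsub := intermediate_value_Ioo (by norm_num : (0:ℝ) ≤ 1) hfc.continuousOn
        have h0 : (0:ℝ) ∈ Set.Ioo (f 0) (f 1) := by rw [hf0, hf1]; constructor <;> linarith
        obtain ⟨t, ht, hft⟩ := hsub h0
        exact ⟨t, ht, hft⟩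
    obtain ⟨t, ⟨ht0, ht1⟩, hft0⟩ := hroot
    have hft : (t*b1+(1-t)*c1)*(t*a2+(1-t)*e2) - (t*b2+(1-t)*c2)*(t*a1+(1-t)*e1) = 0 := hft0
    -- P(t) ≠ 0 since det(P,χ₂) = d₂ ≠ 0
    have hd2ne : d2 ≠ 0 := by
      intro h; rw [h, zero_mul] at hp24; exact lt_irrefl 0 hp24
    have hPP : 0 < (t*b1+(1-t)*c1)^2 + (t*b2+(1-t)*c2)^2 :=
      ptNonzero (t*b1+(1-t)*c1) (t*b2+(1-t)*c2) (c2-b2) (c1-b1) d2 hd2ne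
        (by linear_combination -hd2)
    -- R(t) = c • P(t)
    obtain ⟨c, hc1, hc2⟩ := collinearFactor (t*b1+(1-t)*c1) (t*b2+(1-t)*c2)
      (t*a1+(1-t)*e1) (t*a2+(1-t)*e2) (by linear_combination hft) hPP
    -- the two affine functionals h₂ (zero on edge V₂V₃) and h₄ (zero on edge V₄V₁)
    have hu : 0 < t*k1+(1-t)*k2 := by
      have := mul_pos ht0 p1; have := mul_pos (sub_pos.2 ht1) p2; linarith
    have hv : 0 < t*k4+(1-t)*k3 := by
      have := mul_pos ht0 p4; have := mul_pos (sub_pos.2 ht1) p3; linarith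
    have key1 : (1-c)*d2 = t*k1+(1-t)*k2 := by
      linear_combination (1-c)*hd2 + (c2-b2)*hc1 - (c1-b1)*hc2 - t*hk1 - (1-t)*hk2
    have key2 : c*(t*k4+(1-t)*k3) = (c-1)*d4 := by
      linear_combination (1-c)*hd4 + (a2-e2)*hc1 - (a1-e1)*hc2 + c*t*hk4 + c*(1-t)*hk3
    -- c must be negative
    have hx : c*((t*k4+(1-t)*k3)*d2) = -((t*k1+(1-t)*k2)*d4) := by
      linear_combination d2*key2 - d4*key1
    have hd2sq : (0:ℝ) < d2^2 := by positivity
    have hcneg : c < 0 := by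
      by_contra hcge
      push_neg at hcge
      have h1 : 0 < d4*d2 := by nlinarith
      have h2 : c*((t*k4+(1-t)*k3)*d2^2) = -((t*k1+(1-t)*k2)*(d4*d2)) := by
        linear_combination d2*hx
      nlinarith [mul_pos hv hd2sq, mul_pos hu h1, mul_nonneg hcge (le_of_lt (mul_pos hv hd2sq))]
    have h1c : 0 < 1 - c := by linarith
    have hs0 : 0 < 1/(1-c) := by positivity
    have hs1 : 1/(1-c) < 1 := by rw [div_lt_one h1c]; linarith
    have hsc : (1/(1-c))*(1-c) = 1 := by field_simp
    refine ⟨(1/(1-c), t), ⟨⟨hs0, hs1⟩, ⟨ht0, ht1⟩,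
      (gmap_zero_iff a1 a2 b1 b2 c1 c2 e1 e2 (1/(1-c)) t).2 ⟨?_, ?_⟩⟩, ?_⟩
    · linear_combination (1/(1-c))*hc1 - (t*b1+(1-t)*c1)*hsc
    · linear_combination (1/(1-c))*hc2 - (t*b2+(1-t)*c2)*hsc
    -- uniqueness
    · rintro ⟨s', t'⟩ ⟨⟨hs0', hs1'⟩, ⟨ht0', ht1'⟩, hG'⟩
      obtain ⟨hG1', hG2'⟩ := (gmap_zero_iff a1 a2 b1 b2 c1 c2 e1 e2 s' t').1 hG'
      -- t' is also a root of f
      have hq' : (1-s')*((t'*b1+(1-t')*c1)*(t'*a2+(1-t')*e2)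
          - (t'*b2+(1-t')*c2)*(t'*a1+(1-t')*e1)) = 0 := by
        linear_combination (t'*a2+(1-t')*e2)*hG1' - (t'*a1+(1-t')*e1)*hG2'
      have hft' : (t'*b1+(1-t')*c1)*(t'*a2+(1-t')*e2)
          - (t'*b2+(1-t')*c2)*(t'*a1+(1-t')*e1) = 0 := by
        rcases mul_eq_zero.1 hq' with h | h
        · exfalso; have : (1:ℝ) - s' > 0 := by linarith
          exact ne_of_gt this h
        · exact h
      -- apply the quadratic-uniqueness lemma
      have hsign : (c1*e2-c2*e1) *
          (((b1*a2-b2*a1) - (b1*e2-b2*e1+c1*a2-c2*a1) + (c1*e2-c2*e1))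
            + ((b1*e2-b2*e1+c1*a2-c2*a1) - 2*(c1*e2-c2*e1)) + (c1*e2-c2*e1)) < 0 := by
        have h : (c1*e2-c2*e1) *
          (((b1*a2-b2*a1) - (b1*e2-b2*e1+c1*a2-c2*a1) + (c1*e2-c2*e1))
            + ((b1*e2-b2*e1+c1*a2-c2*a1) - 2*(c1*e2-c2*e1)) + (c1*e2-c2*e1)) = -(d1*d3) := by
          linear_combination (c1*e2-c2*e1)*hd1 + d1*hd3
        rw [h]; linarith
      have htt : t' = t := by
        refine quadUnique
          (A := (b1*a2-b2*a1) - (b1*e2-b2*e1+c1*a2-c2*a1) + (c1*e2-c2*e1))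
          (B := (b1*e2-b2*e1+c1*a2-c2*a1) - 2*(c1*e2-c2*e1))
          (C := c1*e2-c2*e1) ?_ ?_ ht0' ht1' ht0 ht1 hsign
        · linear_combination hft'
        · linear_combination hft
      -- now s' = s
      subst htt
      have hd1' : (s'-1/(1-c))*((t'*a1+(1-t')*e1) - (t'*b1+(1-t')*c1)) = 0 := by
        have hGa : (1/(1-c))*t'*a1 + (1-1/(1-c))*t'*b1 + (1-1/(1-c))*(1-t')*c1
            + (1/(1-c))*(1-t')*e1 = 0 := by
          linear_combination (1/(1-c))*hc1 - (t'*b1+(1-t')*c1)*hsc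
        linear_combination hG1' - hGa
      have hd2' : (s'-1/(1-c))*((t'*a2+(1-t')*e2) - (t'*b2+(1-t')*c2)) = 0 := by
        have hGb : (1/(1-c))*t'*a2 + (1-1/(1-c))*t'*b2 + (1-1/(1-c))*(1-t')*c2
            + (1/(1-c))*(1-t')*e2 = 0 := by
          linear_combination (1/(1-c))*hc2 - (t'*b2+(1-t')*c2)*hsc
        linear_combination hG2' - hGb
      have hss : s' = 1/(1-c) := by
        by_contra hne
        have hne' : s' - 1/(1-c) ≠ 0 := sub_ne_zero.2 hne
        have ee1 : (t'*a1+(1-t')*e1) - (t'*b1+(1-t')*c1) = 0 :=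
          (mul_eq_zero.1 hd1').resolve_left hne'
        have ee2 : (t'*a2+(1-t')*e2) - (t'*b2+(1-t')*c2) = 0 :=
          (mul_eq_zero.1 hd2').resolve_left hne'
        have : t'*k1+(1-t')*k2 = 0 := by
          linear_combination t'*hk1 + (1-t')*hk2 - (c2-b2)*ee1 + (c1-b1)*ee2
        linarith
      rw [Prod.mk.injEq]
      exact ⟨hss, rfl⟩
  · rintro ⟨⟨s, t⟩, ⟨⟨hs0, hs1⟩, ⟨ht0, ht1⟩, hG⟩, _⟩
    obtain ⟨hG1, hG2⟩ := (gmap_zero_iff a1 a2 b1 b2 c1 c2 e1 e2 s t).1 hG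
    obtain ⟨q1, q2, q3, q4⟩ := zeroPos a1 a2 b1 b2 c1 c2 e1 e2 k1 k2 k3 k4 d1 d2 d3 d4 s t
      hk1 hk2 hk3 hk4 hd1 hd2 hd3 hd4 p1 p2 p3 p4 hs0 hs1 ht0 ht1 hG1 hG2
    exact ⟨mul_pos q1 q3, mul_pos q2 q4⟩

lemma gmap_swap_zero (a1 a2 b1 b2 c1 c2 e1 e2 s t : ℝ) :
    Gmap (a2,a1) (b2,b1) (c2,c1) (e2,e1) s t = 0 ↔
    Gmap (a1,a2) (b1,b2) (c1,c2) (e1,e2) s t = 0 := by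
  rw [gmap_zero_iff, gmap_zero_iff]
  exact and_comm

/-- Convex case: if the difference determinants δ₁,…,δ₄ all have the same (nonzero)
sign, then det(V₁,V₂)·det(V₃,V₄) > 0 and det(V₂,V₃)·det(V₄,V₁) > 0 if and only if
there is exactly one zero of the canopy map in (0,1)², i.e. a unique sliding vector
field on the codimension-2 discontinuity Λ. -/
theorem stmt9 (V₁ V₂ V₃ V₄ : ℝ × ℝ) (χ₁ χ₂ χ₃ χ₄ : ℝ × ℝ) (δ₁ δ₂ δ₃ δ₄ : ℝ)
    (hχ₁ : χ₁ = V₂ - V₁) (hχ₂ : χ₂ = V₃ - V₂) (hχ₃ : χ₃ = V₄ - V₃) (hχ₄ : χ₄ = V₁ - V₄)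
    (hδ₁ : δ₁ = det2 χ₁ χ₂) (hδ₂ : δ₂ = det2 χ₂ χ₃)
    (hδ₃ : δ₃ = det2 χ₃ χ₄) (hδ₄ : δ₄ = det2 χ₄ χ₁)
    (hconvex : (0 < δ₁ ∧ 0 < δ₂ ∧ 0 < δ₃ ∧ 0 < δ₄) ∨
               (δ₁ < 0 ∧ δ₂ < 0 ∧ δ₃ < 0 ∧ δ₄ < 0)) :
    (0 < det2 V₁ V₂ * det2 V₃ V₄ ∧ 0 < det2 V₂ V₃ * det2 V₄ V₁) ↔
    (∃! p : ℝ × ℝ, p.1 ∈ Set.Ioo (0 : ℝ) 1 ∧ p.2 ∈ Set.Ioo (0 : ℝ) 1 ∧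
      Gmap V₁ V₂ V₃ V₄ p.1 p.2 = 0) := by
  obtain ⟨a1, a2⟩ := V₁
  obtain ⟨b1, b2⟩ := V₂
  obtain ⟨c1, c2⟩ := V₃
  obtain ⟨e1, e2⟩ := V₄
  subst hχ₁ hχ₂ hχ₃ hχ₄
  rcases hconvex with ⟨q1, q2, q3, q4⟩ | ⟨q1, q2, q3, q4⟩
  · exact core a1 a2 b1 b2 c1 c2 e1 e2 δ₁ δ₂ δ₃ δ₄
      (det2 (a1,a2) (b1,b2)) (det2 (b1,b2) (c1,c2)) (det2 (c1,c2) (e1,e2)) (det2 (e1,e2) (a1,a2))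
      (by rw [hδ₁]; simp [det2]) (by rw [hδ₂]; simp [det2])
      (by rw [hδ₃]; simp [det2]) (by rw [hδ₄]; simp [det2])
      (by simp [det2]) (by simp [det2]) (by simp [det2]) (by simp [det2])
      q1 q2 q3 q4
  · have hiff := core a2 a1 b2 b1 c2 c1 e2 e1 (-δ₁) (-δ₂) (-δ₃) (-δ₄)
      (-(det2 (a1,a2) (b1,b2))) (-(det2 (b1,b2) (c1,c2)))
      (-(det2 (c1,c2) (e1,e2))) (-(det2 (e1,e2) (a1,a2)))
      (by rw [hδ₁]; simp [det2]; try ring) (by rw [hδ₂]; simp [det2]; try ring)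
      (by rw [hδ₃]; simp [det2]; try ring) (by rw [hδ₄]; simp [det2]; try ring)
      (by simp [det2]; try ring) (by simp [det2]; try ring) (by simp [det2]; try ring) (by simp [det2]; try ring)
      (by linarith) (by linarith) (by linarith) (by linarith)
    rw [neg_mul_neg, neg_mul_neg] at hiff
    refine hiff.trans (existsUnique_congr fun p => ?_)
    rw [gmap_swap_zero]
end

section
/- Let V₁, V₂, V₃, V₄ ∈ ℝ² and assume the projected quadrilateral is crossed with χ₁ an edge, i.e. δ₁·δ₄ > 0, δ₂·δ₃ > 0 and δ₁·δ₂ < 0. If det(V₁,V₂)·det(V₃,V₄) < 0 and det(V₂,V₃)·det(V₄,V₁) > 0, then there exists exactly one point (s,t) ∈ (0,1) × (0,1) with G(s,t) = (0,0); i.e., a unique sliding vector field is defined on the codimension-2 discontinuity Λ. -/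
/-!
Write `G(s,t) = t • A(s) + (1 - t) • B(s)` with `A(s) = s • V₁ + (1 - s) • V₂` and
`B(s) = s • V₄ + (1 - s) • V₃`. A zero with `t ∈ (0,1)` puts the origin strictly between `A(s)` and
`B(s)`, so `det(A(s), B(s)) = 0`. This is a quadratic in `s` taking the values `det(V₂,V₃)` and
`det(V₁,V₄)`, of opposite signs, at `0` and `1`, so it has exactly one root in `(0,1)`.
The crossing conditions, combined with the Plücker relation between the six determinants
`det(Vᵢ,Vⱼ)`, fix their signs enough to find a vector `W` (`V₂` or `V₃`) for which `det(·,W)` has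
opposite signs at `A(s)` and `B(s)`. So `A(s)` and `B(s)` point in opposite directions, which gives
exactly one `t`.
-/

open Set

section Det2

variable (U W X : ℝ × ℝ)

lemma det2_anticomm : det2 W U = -det2 U W := by
  unfold det2; ring

lemma det2_self : det2 U U = 0 := by
  unfold det2; ring

lemma det2_zero_left : det2 0 U = 0 := by
  simp [det2]

lemma det2_smul_add_smul_left (a b : ℝ) :
    det2 (a • U + b • W) X = a * det2 U X + b * det2 W X := by
  simp only [det2, Prod.fst_add, Prod.snd_add, Prod.smul_fst, Prod.smul_snd, smul_eq_mul]; ring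

lemma det2_plucker (V₁ V₂ V₃ V₄ : ℝ × ℝ) :
    det2 V₁ V₂ * det2 V₃ V₄ - det2 V₁ V₃ * det2 V₂ V₄ + det2 V₁ V₄ * det2 V₂ V₃ = 0 := by
  unfold det2; ring

end Det2

lemma det2_smul_add_smul_self (A B : ℝ × ℝ) (t : ℝ) :
    det2 (t • A + (1 - t) • B) B = t * det2 A B := by
  rw [det2_smul_add_smul_left, det2_self, mul_zero, add_zero]

lemma eq_zero_of_det2_eq_zero {C B W : ℝ × ℝ} (hBW : det2 B W ≠ 0) (hB : det2 C B = 0)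
    (hW : det2 C W = 0) : C = 0 := by
  unfold det2 at *
  have h₁ : C.1 * (B.1 * W.2 - B.2 * W.1) = 0 := by linear_combination B.1 * hW - W.1 * hB
  have h₂ : C.2 * (B.1 * W.2 - B.2 * W.1) = 0 := by linear_combination B.2 * hW - W.2 * hB
  exact Prod.ext (by simpa [hBW] using h₁) (by simpa [hBW] using h₂)

lemma existsUnique_smul_add_smul_eq_zero {A B W : ℝ × ℝ} (hW : det2 A W * det2 B W < 0)
    (hAB : det2 A B = 0) : ∃! t : ℝ, t ∈ Ioo 0 1 ∧ t • A + (1 - t) • B = 0 := by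
  have hD : det2 B W - det2 A W ≠ 0 := fun h => by
    rw [← sub_eq_zero.mp h] at hW; nlinarith [mul_self_nonneg (det2 B W)]
  set t₀ := det2 B W / (det2 B W - det2 A W)
  have ht₀ : t₀ * det2 A W + (1 - t₀) * det2 B W = 0 := by
    simp only [t₀]; field_simp; ring
  have hA := congrArg (· * det2 A W) ht₀
  have hB := congrArg (· * det2 B W) ht₀
  refine ⟨t₀, ⟨⟨by nlinarith [sq_nonneg (det2 A W)], by nlinarith [sq_nonneg (det2 B W)]⟩, ?_⟩,
    fun t ⟨_, h⟩ => ?_⟩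
  · refine eq_zero_of_det2_eq_zero (right_ne_zero_of_mul hW.ne) ?_ ?_
    · rw [det2_smul_add_smul_self, hAB, mul_zero]
    · rwa [det2_smul_add_smul_left]
  · have := congrArg (det2 · W) h
    rw [det2_smul_add_smul_left, det2_zero_left] at this
    simp only [t₀]
    field_simp
    linear_combination -this

lemma existsUnique_root_Ioo_of_mul_neg {p m r : ℝ} (h : p * r < 0) :
    ∃! s : ℝ, s ∈ Ioo 0 1 ∧ (1 - s) ^ 2 * p + s * (1 - s) * m + s ^ 2 * r = 0 := by
  set f : ℝ → ℝ := fun s => (1 - s) ^ 2 * p + s * (1 - s) * m + s ^ 2 * r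
  have hf : ContinuousOn f (Icc 0 1) := by fun_prop
  obtain ⟨s, hs, hfs⟩ : ∃ s ∈ Ioo (0 : ℝ) 1, f s = 0 := by
    rcases mul_neg_iff.mp h with ⟨hp, hr⟩ | ⟨hp, hr⟩
    · exact intermediate_value_Ioo' zero_le_one hf (by simp [f, hp, hr])
    · exact intermediate_value_Ioo zero_le_one hf (by simp [f, hp, hr])
  refine ⟨s, ⟨hs, hfs⟩, fun s' ⟨hs', hfs'⟩ => ?_⟩
  by_contra hne
  -- two roots `s ≠ s'` in `(0, 1)` would give `p * r = a² s s' (1 - s) (1 - s') ≥ 0`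
  set a := p - m + r
  have hsum : a * (s + s') + (m - 2 * p) = 0 :=
    (mul_right_inj' (sub_ne_zero.mpr hne)).mp (by linear_combination hfs' - hfs)
  have hp : p = a * s * s' := by linear_combination hfs - s * hsum
  have hr : r = a * (1 - s) * (1 - s') := by linear_combination hsum + hp
  have : 0 ≤ p * r := by
    rw [hp, hr]
    have := mul_pos (mul_pos hs.1 hs'.1) (mul_pos (sub_pos.mpr hs.2) (sub_pos.mpr hs'.2))
    nlinarith [sq_nonneg a]
  exact absurd h this.not_gt

lemma crossed_sign_pattern {d₁₂ d₁₃ d₁₄ d₂₃ d₂₄ d₃₄ : ℝ}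
    (hP : d₁₂ * d₃₄ - d₁₃ * d₂₄ + d₁₄ * d₂₃ = 0)
    (h₁ : 0 < (d₁₂ + d₂₃ - d₁₃) * (d₁₂ + d₂₄ - d₁₄))
    (h₂ : 0 < (d₂₃ + d₃₄ - d₂₄) * (d₁₃ + d₃₄ - d₁₄))
    (h₃ : (d₁₂ + d₂₃ - d₁₃) * (d₂₃ + d₃₄ - d₂₄) < 0)
    (hc₁ : d₁₂ * d₃₄ < 0) (hc₂ : d₂₃ * d₁₄ < 0) :
    0 < d₁₃ * d₃₄ ∧ 0 < d₁₂ * d₂₄ := by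
  wlog hδ₁ : 0 < d₁₂ + d₂₃ - d₁₃ generalizing d₁₂ d₁₃ d₁₄ d₂₃ d₂₄ d₃₄
  · have hδ₁' : d₁₂ + d₂₃ - d₁₃ < 0 :=
      (not_lt.mp hδ₁).lt_of_ne (left_ne_zero_of_mul h₃.ne)
    have := this (d₁₂ := -d₁₂) (d₁₃ := -d₁₃) (d₁₄ := -d₁₄) (d₂₃ := -d₂₃) (d₂₄ := -d₂₄)
      (d₃₄ := -d₃₄) (by linear_combination hP) (by linarith) (by linarith) (by linarith)
      (by linarith) (by linarith) (by linarith)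
    simpa using this
  set δ₁ := d₁₂ + d₂₃ - d₁₃
  set δ₂ := d₂₃ + d₃₄ - d₂₄
  set δ₃ := d₁₃ + d₃₄ - d₁₄
  set δ₄ := d₁₂ + d₂₄ - d₁₄
  have hδ₄ : 0 < δ₄ := pos_of_mul_pos_right h₁ hδ₁.le
  have hδ₂ : δ₂ < 0 := neg_of_mul_neg_right h₃ hδ₁.le
  have hδ₃ : δ₃ < 0 := neg_of_mul_pos_right h₂ hδ₂.le
  -- The Plücker relation in terms of the turning determinants `δᵢ`: each identity below
  -- balances terms of known sign, which forces the signs of the `dᵢⱼ`.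
  have hP₁ : d₂₄ * δ₁ + d₁₂ * δ₂ = d₂₃ * δ₄ := by linear_combination hP
  have hP₂ : d₁₄ * δ₂ + d₃₄ * δ₄ = d₂₄ * δ₃ := by linear_combination hP
  have hP₃ : d₁₂ * δ₃ + d₁₄ * δ₁ = d₁₃ * δ₄ := by linear_combination hP
  have h₁₃₂₄ : d₁₃ * d₂₄ < 0 := by linarith
  have h₁₂ : 0 < d₁₂ := by
    by_contra! h₁₂
    have h₃₄ : 0 < d₃₄ := pos_of_mul_neg_right hc₁ h₁₂
    rcases lt_or_gt_of_ne (left_ne_zero_of_mul hc₂.ne) with h₂₃ | h₂₃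
    · have h₁₄ : 0 < d₁₄ := pos_of_mul_neg_right hc₂ h₂₃.le
      have h₂₄ : d₂₄ < 0 := by nlinarith [mul_nonneg_of_nonpos_of_nonpos h₁₂ hδ₂.le]
      have h₁₃ : 0 < d₁₃ := pos_of_mul_neg_left h₁₃₂₄ h₂₄.le
      linarith
    · have h₁₄ : d₁₄ < 0 := neg_of_mul_neg_right hc₂ h₂₃.le
      have h₂₄ : d₂₄ < 0 := by nlinarith [mul_pos_of_neg_of_neg h₁₄ hδ₂]
      linarith
  have h₃₄ : d₃₄ < 0 := neg_of_mul_neg_right hc₁ h₁₂.le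
  have h₁₃ : d₁₃ < 0 := by
    by_contra! h₁₃
    have h₂₄ : d₂₄ < 0 := neg_of_mul_neg_right h₁₃₂₄ h₁₃
    have h₁₄ : d₁₄ < 0 := by nlinarith [mul_pos_of_neg_of_neg h₂₄ hδ₃]
    nlinarith [mul_nonneg h₁₃ hδ₄.le]
  have h₂₄ : 0 < d₂₄ := pos_of_mul_neg_right h₁₃₂₄ h₁₃.le
  exact ⟨mul_pos_of_neg_of_neg h₁₃ h₃₄, mul_pos h₁₂ h₂₄⟩

section Canopy

variable (V₁ V₂ V₃ V₄ : ℝ × ℝ)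

lemma Gmap_eq_smul_add_smul (s t : ℝ) :
    Gmap V₁ V₂ V₃ V₄ s t = t • (s • V₁ + (1 - s) • V₂) + (1 - t) • (s • V₄ + (1 - s) • V₃) := by
  unfold Gmap; module

lemma det2_edge_points (s : ℝ) :
    det2 (s • V₁ + (1 - s) • V₂) (s • V₄ + (1 - s) • V₃) =
      (1 - s) ^ 2 * det2 V₂ V₃ + s * (1 - s) * (det2 V₁ V₃ + det2 V₂ V₄) + s ^ 2 * det2 V₁ V₄ := by
  simp only [det2, Prod.fst_add, Prod.snd_add, Prod.smul_fst, Prod.smul_snd, smul_eq_mul]; ring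

variable {V₁ V₂ V₃ V₄}

lemma exists_det2_mul_neg (h₁₂₃₄ : det2 V₁ V₂ * det2 V₃ V₄ < 0) (h₂₃ : det2 V₂ V₃ ≠ 0)
    (h₁₃ : 0 < det2 V₁ V₃ * det2 V₃ V₄) (h₂₄ : 0 < det2 V₁ V₂ * det2 V₂ V₄)
    {s : ℝ} (hs : s ∈ Ioo 0 1) :
    ∃ W, det2 (s • V₁ + (1 - s) • V₂) W * det2 (s • V₄ + (1 - s) • V₃) W < 0 := by
  have hs₀ := hs.1
  have hs₁ := sub_pos.mpr hs.2
  rcases lt_or_gt_of_ne (mul_ne_zero h₂₃ (right_ne_zero_of_mul h₁₂₃₄.ne)) with h | h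
  · refine ⟨V₂, ?_⟩
    have h₁₂₂₃ : 0 < det2 V₁ V₂ * det2 V₂ V₃ := by
      nlinarith [mul_pos_of_neg_of_neg h h₁₂₃₄, sq_nonneg (det2 V₃ V₄)]
    simp only [det2_smul_add_smul_left, det2_self, det2_anticomm V₂ V₄, det2_anticomm V₂ V₃]
    nlinarith [mul_pos hs₀ (mul_pos hs₀ h₂₄), mul_pos hs₀ (mul_pos hs₁ h₁₂₂₃)]
  · refine ⟨V₃, ?_⟩
    simp only [det2_smul_add_smul_left, det2_self, det2_anticomm V₃ V₄]
    nlinarith [mul_pos hs₀ (mul_pos hs₀ h₁₃), mul_pos hs₀ (mul_pos hs₁ h)]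

theorem existsUnique_Gmap_eq_zero (h₁₂₃₄ : det2 V₁ V₂ * det2 V₃ V₄ < 0)
    (h₂₃₁₄ : det2 V₂ V₃ * det2 V₁ V₄ < 0)
    (h₁₃ : 0 < det2 V₁ V₃ * det2 V₃ V₄) (h₂₄ : 0 < det2 V₁ V₂ * det2 V₂ V₄) :
    ∃! p : ℝ × ℝ, p.1 ∈ Ioo 0 1 ∧ p.2 ∈ Ioo 0 1 ∧ Gmap V₁ V₂ V₃ V₄ p.1 p.2 = 0 := by
  simp only [Gmap_eq_smul_add_smul]
  obtain ⟨s, ⟨hs, hqs⟩, hs_unique⟩ := existsUnique_root_Ioo_of_mul_neg h₂₃₁₄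
  obtain ⟨W, hW⟩ := exists_det2_mul_neg h₁₂₃₄ (left_ne_zero_of_mul h₂₃₁₄.ne) h₁₃ h₂₄ hs
  obtain ⟨t, ⟨ht, hGt⟩, ht_unique⟩ :=
    existsUnique_smul_add_smul_eq_zero hW (by rwa [det2_edge_points])
  refine ⟨(s, t), ⟨hs, ht, hGt⟩, fun ⟨s', t'⟩ ⟨hs', ht', hG'⟩ => ?_⟩
  have hq' := det2_smul_add_smul_self (s' • V₁ + (1 - s') • V₂) (s' • V₄ + (1 - s') • V₃) t'
  rw [hG', det2_zero_left, det2_edge_points, zero_eq_mul] at hq'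
  obtain rfl : s' = s := hs_unique s' ⟨hs', hq'.resolve_left ht'.1.ne'⟩
  rw [ht_unique t' ⟨ht', hG'⟩]

end Canopy

/-- Crossed case with χ₁ an edge (δ₁δ₄ > 0, δ₂δ₃ > 0, δ₁δ₂ < 0): if
det(V₁,V₂)·det(V₃,V₄) < 0 and det(V₂,V₃)·det(V₄,V₁) > 0, then the canopy map has
exactly one zero in (0,1)², i.e. a unique sliding vector field on Λ. -/
theorem stmt10 (V₁ V₂ V₃ V₄ : ℝ × ℝ) (χ₁ χ₂ χ₃ χ₄ : ℝ × ℝ) (δ₁ δ₂ δ₃ δ₄ : ℝ)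
    (hχ₁ : χ₁ = V₂ - V₁) (hχ₂ : χ₂ = V₃ - V₂) (hχ₃ : χ₃ = V₄ - V₃) (hχ₄ : χ₄ = V₁ - V₄)
    (hδ₁ : δ₁ = det2 χ₁ χ₂) (hδ₂ : δ₂ = det2 χ₂ χ₃)
    (hδ₃ : δ₃ = det2 χ₃ χ₄) (hδ₄ : δ₄ = det2 χ₄ χ₁)
    (hcr₁ : 0 < δ₁ * δ₄) (hcr₂ : 0 < δ₂ * δ₃) (hcr₃ : δ₁ * δ₂ < 0)
    (hc₁ : det2 V₁ V₂ * det2 V₃ V₄ < 0) (hc₂ : 0 < det2 V₂ V₃ * det2 V₄ V₁) :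
    ∃! p : ℝ × ℝ, p.1 ∈ Set.Ioo (0 : ℝ) 1 ∧ p.2 ∈ Set.Ioo (0 : ℝ) 1 ∧
      Gmap V₁ V₂ V₃ V₄ p.1 p.2 = 0 := by
  obtain ⟨rfl, rfl, rfl, rfl⟩ :
      δ₁ = det2 V₁ V₂ + det2 V₂ V₃ - det2 V₁ V₃ ∧ δ₂ = det2 V₂ V₃ + det2 V₃ V₄ - det2 V₂ V₄ ∧
      δ₃ = det2 V₁ V₃ + det2 V₃ V₄ - det2 V₁ V₄ ∧ δ₄ = det2 V₁ V₂ + det2 V₂ V₄ - det2 V₁ V₄ := by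
    subst_vars
    simp only [det2, Prod.fst_sub, Prod.snd_sub]
    exact ⟨by ring, by ring, by ring, by ring⟩
  have hc₂' : det2 V₂ V₃ * det2 V₁ V₄ < 0 := by rw [det2_anticomm V₁ V₄] at hc₂; linarith
  obtain ⟨h₁₃, h₂₄⟩ := crossed_sign_pattern (det2_plucker V₁ V₂ V₃ V₄) hcr₁ hcr₂ hcr₃ hc₁ hc₂'
  exact existsUnique_Gmap_eq_zero hc₁ hc₂' h₁₃ h₂₄
end

section
/- Let V₁, V₂, V₃, V₄ ∈ ℝ² and assume the projected quadrilateral is crossed with χ₁ a diagonal, i.e. δ₁·δ₂ > 0, δ₃·δ₄ > 0 and δ₂·δ₃ < 0. If det(V₁,V₂)·det(V₃,V₄) > 0 and det(V₂,V₃)·det(V₄,V₁) < 0, then there exists exactly one point (s,t) ∈ (0,1) × (0,1) with G(s,t) = (0,0); i.e., a unique sliding vector field is defined on the codimension-2 discontinuity Λ. -/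
lemma quad_unique (a0 a1 a2 t₁ t₂ : ℝ)
    (h1 : a0 + a1 * t₁ + a2 * t₁ ^ 2 = 0) (h2 : a0 + a1 * t₂ + a2 * t₂ ^ 2 = 0)
    (ht1 : 0 < t₁) (ht1' : t₁ < 1) (ht2 : 0 < t₂) (ht2' : t₂ < 1)
    (hsign : a0 * (a0 + a1 + a2) < 0) : t₁ = t₂ := by
  by_contra hne
  have hd : t₁ - t₂ ≠ 0 := sub_ne_zero.mpr hne
  have key : a1 + a2 * (t₁ + t₂) = 0 := by
    have h3 : (t₁ - t₂) * (a1 + a2 * (t₁ + t₂)) = 0 := by linear_combination h1 - h2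
    exact (mul_eq_zero.mp h3).resolve_left hd
  have key2 : a0 = a2 * (t₁ * t₂) := by linear_combination h1 - t₁ * key
  have hfact : a0 * (a0 + a1 + a2) = a2 ^ 2 * (t₁ * t₂ * ((1 - t₁) * (1 - t₂))) := by
    linear_combination (a2 * t₁ * t₂) * key + (a0 + a1 + a2 + a2 * (t₁ * t₂)) * key2
  nlinarith [mul_pos (mul_pos ht1 ht2) (mul_pos (by linarith : (0:ℝ) < 1 - t₁) (by linarith : (0:ℝ) < 1 - t₂)), sq_nonneg a2]



lemma interp_sign (x y t : ℝ) (h : 0 < x * y) (h0 : 0 < t) (h1 : t < 1) (hy : y ≠ 0) :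
    0 < ((1 - t) * y + t * x) * y := by
  have hy2 : 0 < y ^ 2 := lt_of_le_of_ne (sq_nonneg y) (Ne.symm (pow_ne_zero 2 hy))
  nlinarith [mul_pos (show (0:ℝ) < 1 - t by linarith) hy2, mul_pos h0 h]

lemma key_sign (b d u v A B D2 D3 : ℝ) (hAB : A * B = b * d) (hBu : B = b - u)
    (hAv : A = d - v) (h2 : 0 < u * D2) (h3 : 0 < v * D3) (h23 : D2 * D3 < 0)
    (hbd : b * d < 0) : b * B < 0 := by
  have hbne : b ≠ 0 := by intro h; rw [h] at hbd; simp at hbd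
  have hD2ne : D2 ≠ 0 := by intro h; rw [h] at h23; simp at h23
  have huvneg : u * v < 0 := by nlinarith [mul_pos h2 h3, h23]
  have huveq : u * v = d * u + b * v := by
    have h5 : (d - v) * (b - u) = b * d := by rw [← hAv, ← hBu]; exact hAB
    linear_combination h5
  by_contra hcon
  push_neg at hcon
  have hprod : (b * B) * (d * A) = (b * d) ^ 2 := by linear_combination b * d * hAB
  have hbd2 : 0 < (b * d) ^ 2 := lt_of_le_of_ne (sq_nonneg _) (Ne.symm (pow_ne_zero 2 (ne_of_lt hbd)))
  have hbBpos : 0 < b * B := by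
    rcases hcon.eq_or_lt with heq | hlt
    · exfalso; rw [← heq, zero_mul] at hprod; linarith
    · exact hlt
  have hdApos : 0 < d * A := by nlinarith [hprod, hbd2, hbBpos]
  rw [hBu] at hbBpos
  rw [hAv] at hdApos
  rcases hbne.lt_or_gt with hbneg | hbpos <;> rcases hD2ne.lt_or_gt with h2neg | h2pos
  · have hd' : 0 < d := by rcases mul_neg_iff.mp hbd with ⟨h', _⟩ | ⟨_, h'⟩ <;> linarith
    have hu' : u < 0 := by rcases mul_pos_iff.mp h2 with ⟨_, h'⟩ | ⟨h', _⟩ <;> linarith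
    have hD3' : 0 < D3 := by rcases mul_neg_iff.mp h23 with ⟨h', _⟩ | ⟨_, h'⟩ <;> linarith
    have hv' : 0 < v := by rcases mul_pos_iff.mp h3 with ⟨h', _⟩ | ⟨_, h'⟩ <;> linarith
    have hvd : v - d < 0 := by rcases mul_pos_iff.mp hdApos with ⟨_, h'⟩ | ⟨h', _⟩ <;> linarith
    nlinarith [huveq, mul_pos_of_neg_of_neg hu' hvd, mul_neg_of_neg_of_pos hbneg hv']
  · have hd' : 0 < d := by rcases mul_neg_iff.mp hbd with ⟨h', _⟩ | ⟨_, h'⟩ <;> linarith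
    have hu' : 0 < u := by rcases mul_pos_iff.mp h2 with ⟨h', _⟩ | ⟨_, h'⟩ <;> linarith
    have hD3' : D3 < 0 := by rcases mul_neg_iff.mp h23 with ⟨_, h'⟩ | ⟨h', _⟩ <;> linarith
    have hv' : v < 0 := by rcases mul_pos_iff.mp h3 with ⟨_, h'⟩ | ⟨h', _⟩ <;> linarith
    nlinarith [huveq, huvneg, mul_pos hd' hu', mul_pos_of_neg_of_neg hbneg hv']
  · have hd' : d < 0 := by rcases mul_neg_iff.mp hbd with ⟨_, h'⟩ | ⟨h', _⟩ <;> linarith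
    have hu' : u < 0 := by rcases mul_pos_iff.mp h2 with ⟨_, h'⟩ | ⟨h', _⟩ <;> linarith
    have hD3' : 0 < D3 := by rcases mul_neg_iff.mp h23 with ⟨h', _⟩ | ⟨_, h'⟩ <;> linarith
    have hv' : 0 < v := by rcases mul_pos_iff.mp h3 with ⟨h', _⟩ | ⟨_, h'⟩ <;> linarith
    nlinarith [huveq, huvneg, mul_pos_of_neg_of_neg hd' hu', mul_pos hbpos hv']
  · have hd' : d < 0 := by rcases mul_neg_iff.mp hbd with ⟨_, h'⟩ | ⟨h', _⟩ <;> linarith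
    have hu' : 0 < u := by rcases mul_pos_iff.mp h2 with ⟨h', _⟩ | ⟨_, h'⟩ <;> linarith
    have hD3' : D3 < 0 := by rcases mul_neg_iff.mp h23 with ⟨_, h'⟩ | ⟨h', _⟩ <;> linarith
    have hv' : v < 0 := by rcases mul_pos_iff.mp h3 with ⟨_, h'⟩ | ⟨h', _⟩ <;> linarith
    have hvd : 0 < v - d := by rcases mul_pos_iff.mp hdApos with ⟨_, h'⟩ | ⟨h', _⟩ <;> linarith
    nlinarith [huveq, mul_pos hu' hvd, mul_neg_of_pos_of_neg hbpos hv']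

lemma s0_bounds (b B s₀ : ℝ) (hbB : b * B < 0) (hk1 : s₀ * (b - B) = b) :
    0 < s₀ ∧ s₀ < 1 := by
  have hbne : b ≠ 0 := by intro h; rw [h] at hbB; simp at hbB
  have hb2 : 0 < b ^ 2 := lt_of_le_of_ne (sq_nonneg b) (Ne.symm (pow_ne_zero 2 hbne))
  have hbBsame : 0 < b * (b - B) := by nlinarith [hbB, hb2]
  constructor
  · have hk2 : s₀ * (b * (b - B)) = b ^ 2 := by linear_combination b * hk1
    nlinarith [hk2, hbBsame, hb2]
  · have hk3 : (1 - s₀) * (b * (b - B)) = -(b * B) := by linear_combination (-b) * hk1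
    nlinarith [hk3, hbBsame, hbB]

lemma Gmap_eq (V₁ V₂ V₃ V₄ : ℝ × ℝ) (s t : ℝ) :
    Gmap V₁ V₂ V₃ V₄ s t =
      ((1 - s) * (t * V₂.1 + (1 - t) * V₃.1) + s * (t * V₁.1 + (1 - t) * V₄.1),
       (1 - s) * (t * V₂.2 + (1 - t) * V₃.2) + s * (t * V₁.2 + (1 - t) * V₄.2)) := by
  simp only [Gmap, Prod.mk_add_mk, Prod.smul_mk, smul_eq_mul, Prod.ext_iff, Prod.fst_add,
    Prod.snd_add, Prod.smul_fst, Prod.smul_snd]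
  constructor <;> ring

/-- Crossed case with χ₁ a diagonal (δ₁δ₂ > 0, δ₃δ₄ > 0, δ₂δ₃ < 0): if
det(V₁,V₂)·det(V₃,V₄) > 0 and det(V₂,V₃)·det(V₄,V₁) < 0, then the canopy map has
exactly one zero in (0,1)², i.e. a unique sliding vector field on Λ. -/
theorem stmt11 (V₁ V₂ V₃ V₄ : ℝ × ℝ) (χ₁ χ₂ χ₃ χ₄ : ℝ × ℝ) (δ₁ δ₂ δ₃ δ₄ : ℝ)
    (hχ₁ : χ₁ = V₂ - V₁) (hχ₂ : χ₂ = V₃ - V₂) (hχ₃ : χ₃ = V₄ - V₃) (hχ₄ : χ₄ = V₁ - V₄)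
    (hδ₁ : δ₁ = det2 χ₁ χ₂) (hδ₂ : δ₂ = det2 χ₂ χ₃)
    (hδ₃ : δ₃ = det2 χ₃ χ₄) (hδ₄ : δ₄ = det2 χ₄ χ₁)
    (hcr₁ : 0 < δ₁ * δ₂) (hcr₂ : 0 < δ₃ * δ₄) (hcr₃ : δ₂ * δ₃ < 0)
    (hc₁ : 0 < det2 V₁ V₂ * det2 V₃ V₄) (hc₂ : det2 V₂ V₃ * det2 V₄ V₁ < 0) :
    ∃! p : ℝ × ℝ, p.1 ∈ Set.Ioo (0 : ℝ) 1 ∧ p.2 ∈ Set.Ioo (0 : ℝ) 1 ∧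
      Gmap V₁ V₂ V₃ V₄ p.1 p.2 = 0 := by
  subst hχ₁ hχ₂ hχ₃ hχ₄ hδ₁ hδ₂ hδ₃ hδ₄
  set a := det2 V₁ V₂ with ha
  set b := det2 V₂ V₃ with hb
  set c := det2 V₃ V₄ with hc
  set d := det2 V₄ V₁ with hd
  set D1 := det2 (V₂ - V₁) (V₃ - V₂) with hD1
  set D2 := det2 (V₃ - V₂) (V₄ - V₃) with hD2
  set D3 := det2 (V₄ - V₃) (V₁ - V₄) with hD3
  set D4 := det2 (V₁ - V₄) (V₂ - V₁) with hD4
  clear_value a b c d D1 D2 D3 D4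
  have hbne : b ≠ 0 := by intro h; rw [h] at hc₂; simp at hc₂
  have hdne : d ≠ 0 := by intro h; rw [h] at hc₂; simp at hc₂
  have hD2ne : D2 ≠ 0 := by intro h; rw [h] at hcr₃; simp at hcr₃
  have hD3ne : D3 ≠ 0 := by intro h; rw [h] at hcr₃; simp at hcr₃
  -- the quadratic f(t) = det(P(t),Q(t))
  set f : ℝ → ℝ := fun t =>
    (t * V₂.1 + (1 - t) * V₃.1) * (t * V₁.2 + (1 - t) * V₄.2) -
    (t * V₂.2 + (1 - t) * V₃.2) * (t * V₁.1 + (1 - t) * V₄.1) with hf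
  set qβ := V₂.1 * V₄.2 - V₂.2 * V₄.1 + V₃.1 * V₁.2 - V₃.2 * V₁.1 - 2 * c with hqβ
  set qα := V₂.1 * V₁.2 - V₂.2 * V₁.1 -
    (V₂.1 * V₄.2 - V₂.2 * V₄.1 + V₃.1 * V₁.2 - V₃.2 * V₁.1) + c with hqα
  clear_value f qβ qα
  have hquad : ∀ t : ℝ, f t = c + qβ * t + qα * t ^ 2 := by
    intro t; simp only [hf, hqβ, hqα, hc, det2]; ring
  have hsum : c + qβ + qα = -a := by
    simp only [hqβ, hqα, hc, ha, det2]; ring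
  have hf0 : f 0 = c := by rw [hquad]; ring
  have hf1 : f 1 = -a := by rw [hquad]; linear_combination hsum
  have hfc : Continuous f := by rw [hf]; fun_prop
  have hcne : c ≠ 0 := by intro h; rw [h] at hc₁; simp at hc₁
  -- existence of a root t₀ of f in (0,1)
  have hex : ∃ t₀ ∈ Set.Ioo (0:ℝ) 1, f t₀ = 0 := by
    rcases lt_or_ge c 0 with hcneg | hcpos
    · have ha' : a < 0 := by
        rcases mul_pos_iff.mp hc₁ with ⟨_, h'⟩ | ⟨h', _⟩ <;> linarith
      have hmem : (0:ℝ) ∈ Set.Ioo (f 0) (f 1) := by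
        rw [hf0, hf1]; exact ⟨hcneg, by linarith⟩
      obtain ⟨t₀, ht₀m, ht₀⟩ := intermediate_value_Ioo zero_le_one hfc.continuousOn hmem
      exact ⟨t₀, ht₀m, ht₀⟩
    · have hc0 : 0 < c := lt_of_le_of_ne hcpos (Ne.symm hcne)
      have ha' : 0 < a := by
        rcases mul_pos_iff.mp hc₁ with ⟨h', _⟩ | ⟨_, h'⟩ <;> linarith
      have hmem : (0:ℝ) ∈ Set.Ioo (f 1) (f 0) := by
        rw [hf0, hf1]; exact ⟨by linarith, hc0⟩
      obtain ⟨t₀, ht₀m, ht₀⟩ := intermediate_value_Ioo' zero_le_one hfc.continuousOn hmem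
      exact ⟨t₀, ht₀m, ht₀⟩
  obtain ⟨t₀, ⟨ht₀0, ht₀1⟩, hft₀⟩ := hex
  set B := (t₀ * V₁.1 + (1 - t₀) * V₄.1) * (V₃.2 - V₂.2) -
           (t₀ * V₁.2 + (1 - t₀) * V₄.2) * (V₃.1 - V₂.1) with hB
  set A := (t₀ * V₂.1 + (1 - t₀) * V₃.1) * (V₁.2 - V₄.2) -
           (t₀ * V₂.2 + (1 - t₀) * V₃.2) * (V₁.1 - V₄.1) with hA
  set u := (1 - t₀) * D2 + t₀ * D1 with hu
  set v := (1 - t₀) * D3 + t₀ * D4 with hv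
  clear_value B A u v
  have hBu : B = b - u := by
    simp only [hB, hu, hb, hD1, hD2, det2, Prod.fst_sub, Prod.snd_sub]; ring
  have hAv : A = d - v := by
    simp only [hA, hv, hd, hD3, hD4, det2, Prod.fst_sub, Prod.snd_sub]; ring
  have hABval : A * B = b * d := by
    have h5 : A * B - b * d =
        -(((V₃.1 - V₂.1) * (V₁.2 - V₄.2) - (V₃.2 - V₂.2) * (V₁.1 - V₄.1))) * f t₀ := by
      simp only [hA, hB, hb, hd, hf, det2]; ring
    rw [hft₀] at h5; linarith
  have husign : 0 < u * D2 := by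
    rw [hu]; exact interp_sign D1 D2 t₀ hcr₁ ht₀0 ht₀1 hD2ne
  have hvsign : 0 < v * D3 := by
    have hcr₂' : 0 < D4 * D3 := by rw [mul_comm]; exact hcr₂
    rw [hv]; exact interp_sign D4 D3 t₀ hcr₂' ht₀0 ht₀1 hD3ne
  have hbB : b * B < 0 := key_sign b d u v A B D2 D3 hABval hBu hAv husign hvsign hcr₃ hc₂
  have hbBne : b - B ≠ 0 := by
    intro h
    have h2 : b * (b - B) = 0 := by rw [h]; ring
    nlinarith [hbB, sq_nonneg b, h2]
  set s₀ := b / (b - B) with hs₀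
  clear_value s₀
  have hk1 : s₀ * (b - B) = b := by rw [hs₀]; exact div_mul_cancel₀ b hbBne
  obtain ⟨hs0pos, hs0lt⟩ := s0_bounds b B s₀ hbB hk1
  -- Cramer identities at t₀
  have hcram1 : b * (t₀ * V₁.1 + (1 - t₀) * V₄.1) = B * (t₀ * V₂.1 + (1 - t₀) * V₃.1) := by
    have h6 : b * (t₀ * V₁.1 + (1 - t₀) * V₄.1) - B * (t₀ * V₂.1 + (1 - t₀) * V₃.1) =
        (V₃.1 - V₂.1) * f t₀ := by simp only [hb, hB, hf, det2]; ring
    rw [hft₀] at h6; linarith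
  have hcram2 : b * (t₀ * V₁.2 + (1 - t₀) * V₄.2) = B * (t₀ * V₂.2 + (1 - t₀) * V₃.2) := by
    have h6 : b * (t₀ * V₁.2 + (1 - t₀) * V₄.2) - B * (t₀ * V₂.2 + (1 - t₀) * V₃.2) =
        (V₃.2 - V₂.2) * f t₀ := by simp only [hb, hB, hf, det2]; ring
    rw [hft₀] at h6; linarith
  have hlin : (1 - s₀) * b + s₀ * B = 0 := by linear_combination -hk1
  refine ⟨⟨s₀, t₀⟩, ⟨⟨hs0pos, hs0lt⟩, ⟨ht₀0, ht₀1⟩, ?_⟩, ?_⟩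
  · show Gmap V₁ V₂ V₃ V₄ s₀ t₀ = 0
    rw [Gmap_eq, Prod.mk_eq_zero]
    constructor
    · have h7 : b * ((1 - s₀) * (t₀ * V₂.1 + (1 - t₀) * V₃.1) +
          s₀ * (t₀ * V₁.1 + (1 - t₀) * V₄.1)) = 0 := by
        linear_combination s₀ * hcram1 + (t₀ * V₂.1 + (1 - t₀) * V₃.1) * hlin
      exact (mul_eq_zero.mp h7).resolve_left hbne
    · have h7 : b * ((1 - s₀) * (t₀ * V₂.2 + (1 - t₀) * V₃.2) +
          s₀ * (t₀ * V₁.2 + (1 - t₀) * V₄.2)) = 0 := by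
        linear_combination s₀ * hcram2 + (t₀ * V₂.2 + (1 - t₀) * V₃.2) * hlin
      exact (mul_eq_zero.mp h7).resolve_left hbne
  · rintro ⟨s, t⟩ ⟨⟨hs0', hs1'⟩, ⟨ht0', ht1'⟩, hG⟩
    rw [Gmap_eq, Prod.mk_eq_zero] at hG
    obtain ⟨e1, e2⟩ := hG
    have hft : f t = 0 := by
      have h8 : s * f t =
          (t * V₂.1 + (1 - t) * V₃.1) *
            ((1 - s) * (t * V₂.2 + (1 - t) * V₃.2) + s * (t * V₁.2 + (1 - t) * V₄.2)) -
          (t * V₂.2 + (1 - t) * V₃.2) *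
            ((1 - s) * (t * V₂.1 + (1 - t) * V₃.1) + s * (t * V₁.1 + (1 - t) * V₄.1)) := by
        simp only [hf]; ring
      rw [e1, e2] at h8
      simp only [mul_zero, sub_zero] at h8
      exact (mul_eq_zero.mp h8).resolve_left (ne_of_gt hs0')
    have htt : t = t₀ := by
      apply quad_unique c qβ qα t t₀
      · rw [← hquad t]; exact hft
      · rw [← hquad t₀]; exact hft₀
      · exact ht0'
      · exact ht1'
      · exact ht₀0
      · exact ht₀1
      · have hr : c * -a = -(a * c) := by ring
        rw [hsum, hr]; linarith [hc₁]
    subst htt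
    have h9 : ((1 - s) * b + s * B) * (t * V₂.1 + (1 - t) * V₃.1) = 0 := by
      linear_combination b * e1 - s * hcram1
    have h10 : ((1 - s) * b + s * B) * (t * V₂.2 + (1 - t) * V₃.2) = 0 := by
      linear_combination b * e2 - s * hcram2
    have hlin2 : (1 - s) * b + s * B = 0 := by
      rcases mul_eq_zero.mp h9 with h | hp1
      · exact h
      rcases mul_eq_zero.mp h10 with h | hp2
      · exact h
      exfalso
      have h11 : t * b = (t * V₂.1 + (1 - t) * V₃.1) * V₃.2 -
          (t * V₂.2 + (1 - t) * V₃.2) * V₃.1 := by simp only [hb, det2]; ring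
      rw [hp1, hp2] at h11
      simp only [zero_mul, sub_zero] at h11
      exact (mul_ne_zero (ne_of_gt ht0') hbne) (by linarith)
    have hseq : s = s₀ := by
      have h12 : (s - s₀) * (b - B) = 0 := by linear_combination -hlin2 - hk1
      rcases mul_eq_zero.mp h12 with h | h
      · linarith
      · exact absurd h hbBne
    rw [hseq]
end

section
/- Let V₁, V₂, V₃, V₄ ∈ ℝ², assume the projected quadrilateral is convex (δ₁, δ₂, δ₃, δ₄ all of the same nonzero sign), and let (s,t) ∈ (0,1) × (0,1) satisfy G(s,t) = (0,0). If det(Vᵢ, V_{i+1}) < 0 for i = 1,2,3,4 (with V₅ = V₁), then detDG(s,t) < 0 and the sliding vector field is of saddle type; if det(Vᵢ, V_{i+1}) > 0 for i = 1,2,3,4, then detDG(s,t) > 0 and the sliding vector field is of node/focus/center type. -/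
/-- ∂G/∂s = t·(V₁-V₂) + (1-t)·(V₄-V₃). -/
noncomputable def uvec (V₁ V₂ V₃ V₄ : ℝ × ℝ) (t : ℝ) : ℝ × ℝ :=
  t • (V₁ - V₂) + (1 - t) • (V₄ - V₃)

/-- ∂G/∂t = s·(V₁-V₄) + (1-s)·(V₂-V₃). -/
noncomputable def vvec (V₁ V₂ V₃ V₄ : ℝ × ℝ) (s : ℝ) : ℝ × ℝ :=
  s • (V₁ - V₄) + (1 - s) • (V₂ - V₃)

/-- Jacobian determinant det DG(s,t) = det(∂G/∂s, ∂G/∂t). -/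
noncomputable def detDG (V₁ V₂ V₃ V₄ : ℝ × ℝ) (s t : ℝ) : ℝ :=
  det2 (uvec V₁ V₂ V₃ V₄ t) (vvec V₁ V₂ V₃ V₄ s)

/-- Convex case: at a zero (s,t) ∈ (0,1)² of the canopy map, if all cyclic determinants
det(Vᵢ,V_{i+1}) are negative then det DG(s,t) < 0 (saddle type sliding), and if all are
positive then det DG(s,t) > 0 (node/focus/center type sliding). -/
theorem stmt15 (V₁ V₂ V₃ V₄ : ℝ × ℝ) (χ₁ χ₂ χ₃ χ₄ : ℝ × ℝ) (δ₁ δ₂ δ₃ δ₄ : ℝ)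
    (hχ₁ : χ₁ = V₂ - V₁) (hχ₂ : χ₂ = V₃ - V₂) (hχ₃ : χ₃ = V₄ - V₃) (hχ₄ : χ₄ = V₁ - V₄)
    (hδ₁ : δ₁ = det2 χ₁ χ₂) (hδ₂ : δ₂ = det2 χ₂ χ₃)
    (hδ₃ : δ₃ = det2 χ₃ χ₄) (hδ₄ : δ₄ = det2 χ₄ χ₁)
    (hconvex : (0 < δ₁ ∧ 0 < δ₂ ∧ 0 < δ₃ ∧ 0 < δ₄) ∨
               (δ₁ < 0 ∧ δ₂ < 0 ∧ δ₃ < 0 ∧ δ₄ < 0))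
    (s t : ℝ) (hs : s ∈ Set.Ioo (0 : ℝ) 1) (ht : t ∈ Set.Ioo (0 : ℝ) 1)
    (hG : Gmap V₁ V₂ V₃ V₄ s t = 0) :
    (det2 V₁ V₂ < 0 → det2 V₂ V₃ < 0 → det2 V₃ V₄ < 0 → det2 V₄ V₁ < 0 →
      detDG V₁ V₂ V₃ V₄ s t < 0) ∧
    (0 < det2 V₁ V₂ → 0 < det2 V₂ V₃ → 0 < det2 V₃ V₄ → 0 < det2 V₄ V₁ →
      0 < detDG V₁ V₂ V₃ V₄ s t) := by
  obtain ⟨hs0, hs1⟩ := hs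
  obtain ⟨ht0, ht1⟩ := ht
  have hGx : s * t * V₁.1 + (1 - s) * t * V₂.1 + (1 - s) * (1 - t) * V₃.1
      + s * (1 - t) * V₄.1 = 0 := by
    have := congrArg Prod.fst hG
    simpa [Gmap] using this
  have hGy : s * t * V₁.2 + (1 - s) * t * V₂.2 + (1 - s) * (1 - t) * V₃.2
      + s * (1 - t) * V₄.2 = 0 := by
    have := congrArg Prod.snd hG
    simpa [Gmap] using this
  have hs1' : (0:ℝ) < 1 - s := by linarith
  have ht1' : (0:ℝ) < 1 - t := by linarith
  have hc : (1 - s) * (1 - t) ≠ 0 := by positivity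
  have hx3 : V₃.1 = -(s * t * V₁.1 + (1 - s) * t * V₂.1 + s * (1 - t) * V₄.1)
      / ((1 - s) * (1 - t)) := by
    field_simp
    linarith [hGx]
  have hy3 : V₃.2 = -(s * t * V₁.2 + (1 - s) * t * V₂.2 + s * (1 - t) * V₄.2)
      / ((1 - s) * (1 - t)) := by
    field_simp
    linarith [hGy]
  have key : 2 * (s * t * (1 - s) * (1 - t)) * detDG V₁ V₂ V₃ V₄ s t
      = s * t ^ 2 * (1 - s) * det2 V₁ V₂ + (1 - s) ^ 2 * t * (1 - t) * det2 V₂ V₃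
        + s * (1 - s) * (1 - t) ^ 2 * det2 V₃ V₄ + s ^ 2 * t * (1 - t) * det2 V₄ V₁ := by
    simp only [detDG, det2, uvec, vvec, Prod.fst_add, Prod.snd_add, Prod.fst_sub,
      Prod.snd_sub, Prod.smul_fst, Prod.smul_snd, smul_eq_mul]
    rw [hx3, hy3]
    field_simp
    ring
  have hmul : (0:ℝ) < 2 * (s * t * (1 - s) * (1 - t)) := by positivity
  constructor
  · intro h1 h2 h3 h4
    have hneg : 2 * (s * t * (1 - s) * (1 - t)) * detDG V₁ V₂ V₃ V₄ s t < 0 := by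
      rw [key]
      have n1 := mul_neg_of_pos_of_neg (by positivity : (0:ℝ) < s * t ^ 2 * (1 - s)) h1
      have n2 := mul_neg_of_pos_of_neg (by positivity : (0:ℝ) < (1 - s) ^ 2 * t * (1 - t)) h2
      have n3 := mul_neg_of_pos_of_neg (by positivity : (0:ℝ) < s * (1 - s) * (1 - t) ^ 2) h3
      have n4 := mul_neg_of_pos_of_neg (by positivity : (0:ℝ) < s ^ 2 * t * (1 - t)) h4
      linarith
    by_contra h
    exact absurd hneg (not_lt.mpr (mul_nonneg hmul.le (not_lt.mp h)))
  · intro h1 h2 h3 h4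
    have hpos : 0 < 2 * (s * t * (1 - s) * (1 - t)) * detDG V₁ V₂ V₃ V₄ s t := by
      rw [key]
      have n1 := mul_pos (by positivity : (0:ℝ) < s * t ^ 2 * (1 - s)) h1
      have n2 := mul_pos (by positivity : (0:ℝ) < (1 - s) ^ 2 * t * (1 - t)) h2
      have n3 := mul_pos (by positivity : (0:ℝ) < s * (1 - s) * (1 - t) ^ 2) h3
      have n4 := mul_pos (by positivity : (0:ℝ) < s ^ 2 * t * (1 - t)) h4
      linarith
    by_contra h
    exact absurd hpos (not_lt.mpr (mul_nonpos_of_nonneg_of_nonpos hmul.le (not_lt.mp h)))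
end

section
/- Let V₁, V₂, V₃, V₄ ∈ ℝ² with A + Γ − B ≠ 0, and suppose (s₁,t₁) and (s₂,t₂) are points of (0,1) × (0,1) with G(s₁,t₁) = G(s₂,t₂) = (0,0) and t₁ ≠ t₂. Then detDG(s₁,t₁) · detDG(s₂,t₂) < 0; i.e., whenever a pair of sliding vector fields exists on the codimension-2 discontinuity Λ, one of them is of saddle type and the other is of node/focus/center type. -/
/-- If A + Γ - B ≠ 0 and the canopy map has two zeros in (0,1)² with distinct
t-values, the Jacobian determinants at the two zeros have opposite signs: one
sliding vector field is of saddle type and the other of node/focus/center type. -/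
theorem stmt16 (V₁ V₂ V₃ V₄ : ℝ × ℝ) (A B Γ : ℝ)
    (hA : A = det2 V₁ V₂) (hB : B = det2 V₄ V₂ + det2 V₁ V₃) (hΓ : Γ = det2 V₄ V₃)
    (hABΓ : A + Γ - B ≠ 0)
    (s₁ t₁ s₂ t₂ : ℝ)
    (hs₁ : s₁ ∈ Set.Ioo (0 : ℝ) 1) (ht₁ : t₁ ∈ Set.Ioo (0 : ℝ) 1)
    (hs₂ : s₂ ∈ Set.Ioo (0 : ℝ) 1) (ht₂ : t₂ ∈ Set.Ioo (0 : ℝ) 1)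
    (hG₁ : Gmap V₁ V₂ V₃ V₄ s₁ t₁ = 0) (hG₂ : Gmap V₁ V₂ V₃ V₄ s₂ t₂ = 0)
    (htt : t₁ ≠ t₂) :
    detDG V₁ V₂ V₃ V₄ s₁ t₁ * detDG V₁ V₂ V₃ V₄ s₂ t₂ < 0 := by
  obtain ⟨hs₁0, hs₁1⟩ := hs₁
  obtain ⟨hs₂0, hs₂1⟩ := hs₂
  have e11 : s₁*t₁*V₁.1 + (1-s₁)*t₁*V₂.1 + (1-s₁)*(1-t₁)*V₃.1 + s₁*(1-t₁)*V₄.1 = 0 := by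
    have h := congrArg Prod.fst hG₁
    simp only [Gmap, Prod.fst_add, Prod.smul_fst, smul_eq_mul, Prod.fst_zero] at h
    linarith [h]
  have e12 : s₁*t₁*V₁.2 + (1-s₁)*t₁*V₂.2 + (1-s₁)*(1-t₁)*V₃.2 + s₁*(1-t₁)*V₄.2 = 0 := by
    have h := congrArg Prod.snd hG₁
    simp only [Gmap, Prod.snd_add, Prod.smul_snd, smul_eq_mul, Prod.snd_zero] at h
    linarith [h]
  have e21 : s₂*t₂*V₁.1 + (1-s₂)*t₂*V₂.1 + (1-s₂)*(1-t₂)*V₃.1 + s₂*(1-t₂)*V₄.1 = 0 := by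
    have h := congrArg Prod.fst hG₂
    simp only [Gmap, Prod.fst_add, Prod.smul_fst, smul_eq_mul, Prod.fst_zero] at h
    linarith [h]
  have e22 : s₂*t₂*V₁.2 + (1-s₂)*t₂*V₂.2 + (1-s₂)*(1-t₂)*V₃.2 + s₂*(1-t₂)*V₄.2 = 0 := by
    have h := congrArg Prod.snd hG₂
    simp only [Gmap, Prod.snd_add, Prod.smul_snd, smul_eq_mul, Prod.snd_zero] at h
    linarith [h]
  have hq₁ : (A+Γ-B)*t₁^2 + (B-2*Γ)*t₁ + Γ = 0 := by
    have h : s₁ * ((A+Γ-B)*t₁^2 + (B-2*Γ)*t₁ + Γ) = 0 := by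
      subst hA hB hΓ
      simp only [det2]
      linear_combination (t₁*V₂.2+(1-t₁)*V₃.2) * e11 - (t₁*V₂.1+(1-t₁)*V₃.1) * e12
    rcases mul_eq_zero.mp h with h | h
    · exact absurd h (ne_of_gt hs₁0)
    · exact h
  have hq₂ : (A+Γ-B)*t₂^2 + (B-2*Γ)*t₂ + Γ = 0 := by
    have h : s₂ * ((A+Γ-B)*t₂^2 + (B-2*Γ)*t₂ + Γ) = 0 := by
      subst hA hB hΓ
      simp only [det2]
      linear_combination (t₂*V₂.2+(1-t₂)*V₃.2) * e21 - (t₂*V₂.1+(1-t₂)*V₃.1) * e22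
    rcases mul_eq_zero.mp h with h | h
    · exact absurd h (ne_of_gt hs₂0)
    · exact h
  have hd₁ : detDG V₁ V₂ V₃ V₄ s₁ t₁ = 2*(A+Γ-B)*t₁ + (B-2*Γ) := by
    subst hA hB hΓ
    simp only [detDG, det2, uvec, vvec, Prod.fst_add, Prod.snd_add, Prod.smul_fst,
      Prod.smul_snd, Prod.fst_sub, Prod.snd_sub, smul_eq_mul]
    linear_combination (V₁.2-V₄.2-V₂.2+V₃.2) * e11 - (V₁.1-V₄.1-V₂.1+V₃.1) * e12
  have hd₂ : detDG V₁ V₂ V₃ V₄ s₂ t₂ = 2*(A+Γ-B)*t₂ + (B-2*Γ) := by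
    subst hA hB hΓ
    simp only [detDG, det2, uvec, vvec, Prod.fst_add, Prod.snd_add, Prod.smul_fst,
      Prod.smul_snd, Prod.fst_sub, Prod.snd_sub, smul_eq_mul]
    linear_combination (V₁.2-V₄.2-V₂.2+V₃.2) * e21 - (V₁.1-V₄.1-V₂.1+V₃.1) * e22
  have hsum : (A+Γ-B)*(t₁+t₂) + (B-2*Γ) = 0 := by
    have h : (t₁ - t₂) * ((A+Γ-B)*(t₁+t₂) + (B-2*Γ)) = 0 := by
      linear_combination hq₁ - hq₂
    rcases mul_eq_zero.mp h with h | h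
    · exact absurd (sub_eq_zero.mp h) htt
    · exact h
  rw [hd₁, hd₂]
  have key : (2*(A+Γ-B)*t₁ + (B-2*Γ)) * (2*(A+Γ-B)*t₂ + (B-2*Γ))
      = -((A+Γ-B)^2*(t₁-t₂)^2) := by
    linear_combination ((A+Γ-B)*(t₁+t₂) + (B-2*Γ)) * hsum
  rw [key]
  have ha2 : 0 < (A+Γ-B)^2 := lt_of_le_of_ne (sq_nonneg _) (Ne.symm (pow_ne_zero 2 hABΓ))
  have ht2 : 0 < (t₁-t₂)^2 :=
    lt_of_le_of_ne (sq_nonneg _) (Ne.symm (pow_ne_zero 2 (sub_ne_zero.mpr htt)))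
  have := mul_pos ha2 ht2
  linarith
end

section
/- Let V₁, V₂, V₃, V₄ ∈ ℝ² with Vᵢ = (βᵢ, γᵢ), and let (s,t) ∈ (0,1) × (0,1) satisfy G(s,t) = (0,0) and detDG(s,t) > 0 (node/focus type sliding). Define s₁ = (β₁−β₂)·t + (β₄−β₃)·(1−t) and s₂ = (γ₁−γ₄)·s + (γ₂−γ₃)·(1−s), and suppose s₁ and s₂ have the same sign. Then for every p, q > 0, the real 2×2 matrix M with first column p·u(s,t) and second column q·v(s,t) satisfies: if s₁ < 0 and s₂ < 0 then every complex eigenvalue of M has negative real part (the sliding vector field is attracting for every choice of regularization functions), and if s₁ > 0 and s₂ > 0 then every complex eigenvalue of M has positive real part (the sliding vector field is repelling for every choice of regularization functions). -/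
/-- A real 2×2 matrix has all eigenvalues with negative real part. -/
def AllEigRealPartNeg (M : Matrix (Fin 2) (Fin 2) ℝ) : Prop :=
  ∀ z : ℂ, (Polynomial.aeval z) M.charpoly = 0 → z.re < 0

/-- A real 2×2 matrix has all eigenvalues with positive real part. -/
def AllEigRealPartPos (M : Matrix (Fin 2) (Fin 2) ℝ) : Prop :=
  ∀ z : ℂ, (Polynomial.aeval z) M.charpoly = 0 → 0 < z.re

/-- Roots of a monic real quadratic with positive linear and constant coefficients
have negative real part. -/
lemma quadNeg (b c : ℝ) (hb : 0 < b) (hc : 0 < c) (z : ℂ)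
    (hz : z^2 + (b:ℂ)*z + (c:ℂ) = 0) : z.re < 0 := by
  have hre := congrArg Complex.re hz
  have him := congrArg Complex.im hz
  simp [pow_two, Complex.add_re, Complex.add_im, Complex.mul_re, Complex.mul_im] at hre him
  set x := z.re with hx
  set y := z.im with hy
  rcases eq_or_ne y 0 with h0 | h0
  · rw [h0] at hre
    by_contra hxx
    push_neg at hxx
    nlinarith
  · have h2 : y * (2*x + b) = 0 := by nlinarith [him]
    rcases mul_eq_zero.mp h2 with h | h
    · exact absurd h h0
    · linarith

/-- Evaluation of the characteristic polynomial of a real 2×2 matrix at a complex number. -/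
lemma charpoly_eval (M : Matrix (Fin 2) (Fin 2) ℝ) (z : ℂ) :
    (Polynomial.aeval z) M.charpoly
      = z^2 - ((M 0 0 + M 1 1 : ℝ) : ℂ)*z + ((M 0 0 * M 1 1 - M 0 1 * M 1 0 : ℝ) : ℂ) := by
  rw [Matrix.charpoly, Matrix.det_fin_two]
  push_cast
  simp [Matrix.charmatrix_apply, Polynomial.X]
  ring

/-- At a node/focus type zero (s,t) ∈ (0,1)² of the canopy map (det DG(s,t) > 0), if
s₁ = (β₁-β₂)t + (β₄-β₃)(1-t) and s₂ = (γ₁-γ₄)s + (γ₂-γ₃)(1-s) have the same sign,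
then for every p, q > 0 the matrix with columns p·u(s,t), q·v(s,t) has all eigenvalues
with negative real part if s₁, s₂ < 0 (attracting sliding for every regularization)
and all eigenvalues with positive real part if s₁, s₂ > 0 (repelling sliding). -/
theorem stmt18 (V₁ V₂ V₃ V₄ : ℝ × ℝ) (β₁ β₂ β₃ β₄ γ₁ γ₂ γ₃ γ₄ : ℝ)
    (h1 : V₁ = (β₁, γ₁)) (h2 : V₂ = (β₂, γ₂)) (h3 : V₃ = (β₃, γ₃)) (h4 : V₄ = (β₄, γ₄))
    (s t : ℝ) (hs : s ∈ Set.Ioo (0 : ℝ) 1) (ht : t ∈ Set.Ioo (0 : ℝ) 1)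
    (hG : Gmap V₁ V₂ V₃ V₄ s t = 0) (hdet : 0 < detDG V₁ V₂ V₃ V₄ s t)
    (s₁ s₂ : ℝ)
    (hs₁ : s₁ = (β₁ - β₂) * t + (β₄ - β₃) * (1 - t))
    (hs₂ : s₂ = (γ₁ - γ₄) * s + (γ₂ - γ₃) * (1 - s))
    (hsign : 0 < s₁ * s₂)
    (p q : ℝ) (hp : 0 < p) (hq : 0 < q)
    (M : Matrix (Fin 2) (Fin 2) ℝ)
    (hM : M = !![p * (uvec V₁ V₂ V₃ V₄ t).1, q * (vvec V₁ V₂ V₃ V₄ s).1;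
                 p * (uvec V₁ V₂ V₃ V₄ t).2, q * (vvec V₁ V₂ V₃ V₄ s).2]) :
    (s₁ < 0 → s₂ < 0 → AllEigRealPartNeg M) ∧
    (0 < s₁ → 0 < s₂ → AllEigRealPartPos M) := by
  have htr : M 0 0 + M 1 1 = p * s₁ + q * s₂ := by
    simp [hM, uvec, vvec, h1, h2, h3, h4, hs₁, hs₂]
    ring
  have hdt : M 0 0 * M 1 1 - M 0 1 * M 1 0 = p * q * detDG V₁ V₂ V₃ V₄ s t := by
    simp [hM, detDG, det2]
    ring
  have hD : 0 < p * q * detDG V₁ V₂ V₃ V₄ s t := by positivity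
  constructor
  · intro hn1 hn2 z hz
    rw [charpoly_eval, htr, hdt] at hz
    have hb : 0 < -(p * s₁ + q * s₂) := by nlinarith
    exact quadNeg _ _ hb hD z (by push_cast at hz ⊢; linear_combination hz)
  · intro hp1 hp2 z hz
    rw [charpoly_eval, htr, hdt] at hz
    have hb : 0 < p * s₁ + q * s₂ := by nlinarith
    have := quadNeg _ _ hb hD (-z) (by push_cast at hz ⊢; linear_combination hz)
    simp only [Complex.neg_re] at this
    linarith
end
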